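/- arXiv:2003.09767 — 9 statements merged into one kernel-verified Lean document; each statement's English description precedes it below -/
import Mathlib

section
/- Let G be a semigroup, let E and Y be real Banach spaces with bounded representations u and v of G respectively, with sup_{g∈G}‖u(g)‖ ≤ M and sup_{g∈G}‖v(g)‖ ≤ M, let X be a closed subspace of E with u(g)X ⊆ X for all g ∈ G, and let Ω : Y → E be any map. Then the following are equivalent: (i) there is C ≥ 0 such that for all g ∈ G and y ∈ Y, u(g)(Ω y) − Ω(v(g) y) ∈ X and ‖u(g)(Ω y) − Ω(v(g) y)‖ ≤ C‖y‖ (i.e. Ω is a G-centralizer); (ii) there is C' ≥ 0 such that for all g ∈ G and all pairs (x,y) ∈ E × Y with x − Ω y ∈ X, one has u(g)x − Ω(v(g)y) ∈ X and ‖u(g)x − Ω(v(g)y)‖ + ‖v(g)y‖ ≤ C'(‖x − Ω y‖ + ‖y‖) (i.e. the diagonal maps (x,y) ↦ (u(g)x, v(g)y) are uniformly bounded for the twisted-sum quasi-norm). -/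
/-! The decomposition `u g x - Ω (v g y) = u g (x - Ω y) + (u g (Ω y) - Ω (v g y))` turns a
centralizer constant `C` into the bound `max M 0 + C` for the diagonal action on the twisted sum;
conversely, evaluating that bound at the pairs `(Ω y, y)` gives back the centralizer estimate. -/

section Twist

variable {𝕜 E Y : Type*} [NontriviallyNormedField 𝕜]
  [NormedAddCommGroup E] [NormedSpace 𝕜 E] [NormedAddCommGroup Y] [NormedSpace 𝕜 Y]
  (T : E →L[𝕜] E) (S : Y →L[𝕜] Y) (Ω : Y → E)

theorem sub_twist_eq (x : E) (y : Y) :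
    T x - Ω (S y) = T (x - Ω y) + (T (Ω y) - Ω (S y)) := by
  rw [map_sub]
  abel

theorem sub_twist_mem {X : Submodule 𝕜 E} (hX : ∀ x ∈ X, T x ∈ X) {x : E} {y : Y}
    (hxy : x - Ω y ∈ X) (hΩ : T (Ω y) - Ω (S y) ∈ X) : T x - Ω (S y) ∈ X := by
  rw [sub_twist_eq]
  exact X.add_mem (hX _ hxy) hΩ

theorem norm_sub_twist_add_norm_le {K C : ℝ} (hC : 0 ≤ C) (hT : ‖T‖ ≤ K) (hS : ‖S‖ ≤ K)
    (x : E) {y : Y} (hΩ : ‖T (Ω y) - Ω (S y)‖ ≤ C * ‖y‖) :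
    ‖T x - Ω (S y)‖ + ‖S y‖ ≤ (K + C) * (‖x - Ω y‖ + ‖y‖) := by
  have hK : 0 ≤ K := (norm_nonneg T).trans hT
  have hTx : ‖T (x - Ω y)‖ ≤ K * ‖x - Ω y‖ := T.le_of_opNorm_le hT _
  have hSy : ‖S y‖ ≤ K * ‖y‖ := S.le_of_opNorm_le hS _
  have hsub : ‖T x - Ω (S y)‖ ≤ K * ‖x - Ω y‖ + C * ‖y‖ := by
    rw [sub_twist_eq]
    exact (norm_add_le _ _).trans (add_le_add hTx hΩ)
  nlinarith [norm_nonneg (x - Ω y), norm_nonneg y]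

end Twist

theorem stmt_0_general {G : Type*}
    {E Y : Type*} [NormedAddCommGroup E] [NormedSpace ℝ E]
    [NormedAddCommGroup Y] [NormedSpace ℝ Y]
    (u : G → E →L[ℝ] E) (v : G → Y →L[ℝ] Y)
    (M : ℝ) (huM : ∀ g : G, ‖u g‖ ≤ M) (hvM : ∀ g : G, ‖v g‖ ≤ M)
    (X : Submodule ℝ E)
    (hXinv : ∀ g : G, ∀ x ∈ X, u g x ∈ X)
    (Ω : Y → E) :
    (∃ C : ℝ, 0 ≤ C ∧ ∀ (g : G) (y : Y),
        u g (Ω y) - Ω (v g y) ∈ X ∧ ‖u g (Ω y) - Ω (v g y)‖ ≤ C * ‖y‖) ↔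
    (∃ C' : ℝ, 0 ≤ C' ∧ ∀ (g : G) (x : E) (y : Y), x - Ω y ∈ X →
        u g x - Ω (v g y) ∈ X ∧
        ‖u g x - Ω (v g y)‖ + ‖v g y‖ ≤ C' * (‖x - Ω y‖ + ‖y‖)) := by
  constructor
  · rintro ⟨C, hC, hΩ⟩
    refine ⟨max M 0 + C, add_nonneg (le_max_right _ _) hC, fun g x y hxy => ⟨?_, ?_⟩⟩
    · exact sub_twist_mem (u g) (v g) Ω (hXinv g) hxy (hΩ g y).1
    · exact norm_sub_twist_add_norm_le (u g) (v g) Ω hC ((huM g).trans (le_max_left _ _))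
        ((hvM g).trans (le_max_left _ _)) x (hΩ g y).2
  · rintro ⟨C', hC', hbdd⟩
    refine ⟨C', hC', fun g y => ?_⟩
    obtain ⟨hmem, hnorm⟩ := hbdd g (Ω y) y (by simp)
    simp only [sub_self, norm_zero, zero_add] at hnorm
    exact ⟨hmem, by linarith [norm_nonneg (v g y)]⟩

/-- For a semigroup `G` acting boundedly on Banach spaces `E` and `Y`
(with a closed invariant subspace `X ⊆ E`) and any map `Ω : Y → E`, being a
`G`-centralizer is equivalent to the uniform boundedness of the diagonal actions
on the twisted sum. -/
theorem stmt_0 {G : Type*} [Semigroup G]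
    {E Y : Type*} [NormedAddCommGroup E] [NormedSpace ℝ E] [CompleteSpace E]
    [NormedAddCommGroup Y] [NormedSpace ℝ Y] [CompleteSpace Y]
    (u : G → E →L[ℝ] E) (v : G → Y →L[ℝ] Y)
    (hu : ∀ g h : G, u (g * h) = (u g).comp (u h))
    (hv : ∀ g h : G, v (g * h) = (v g).comp (v h))
    (M : ℝ) (huM : ∀ g : G, ‖u g‖ ≤ M) (hvM : ∀ g : G, ‖v g‖ ≤ M)
    (X : Submodule ℝ E) (hXc : IsClosed (X : Set E))
    (hXinv : ∀ g : G, ∀ x ∈ X, u g x ∈ X)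
    (Ω : Y → E) :
    (∃ C : ℝ, 0 ≤ C ∧ ∀ (g : G) (y : Y),
        u g (Ω y) - Ω (v g y) ∈ X ∧ ‖u g (Ω y) - Ω (v g y)‖ ≤ C * ‖y‖) ↔
    (∃ C' : ℝ, 0 ≤ C' ∧ ∀ (g : G) (x : E) (y : Y), x - Ω y ∈ X →
        u g x - Ω (v g y) ∈ X ∧
        ‖u g x - Ω (v g y)‖ + ‖v g y‖ ≤ C' * (‖x - Ω y‖ + ‖y‖)) :=
  stmt_0_general u v M huM hvM X hXinv Ω
end

section
/- Let G be an amenable group. Let E and Y be real Banach spaces with bounded representations u and v of G by invertible operators (u(g⁻¹) = u(g)⁻¹ and v(g⁻¹) = v(g)⁻¹), let X be a closed subspace of E with u(g)X ⊆ X for all g ∈ G, and assume X (with the restricted representation g ↦ u(g)|_X) is G-complemented in its bidual. Let Y₀₀ be a dense linear subspace of Y with v(g)Y₀₀ ⊆ Y₀₀ for all g, and let Ω : Y₀₀ → E be a G-centralizer: there is C with u(g)(Ωy) − Ω(v(g)y) ∈ X and ‖u(g)(Ωy) − Ω(v(g)y)‖ ≤ C‖y‖ for all g ∈ G, y ∈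 Y₀₀. Then there exists a map ω : Y₀₀ → E which is G-equivariant (u(g)(ω y) = ω(v(g) y) for all g ∈ G, y ∈ Y₀₀), satisfies Ω y − ω y ∈ X for all y ∈ Y₀₀, and is at bounded distance from Ω: sup{‖Ω y − ω y‖ : y ∈ Y₀₀, ‖y‖ ≤ 1} < ∞. Moreover ω can be chosen linear whenever Ω is linear. -/
/-!
For `y ∈ Y₀₀` the defect `g ↦ u g (Ω (v g⁻¹ y)) - Ω y` is an `X`-valued function on `G`, bounded
by `|C| · Mv · ‖y‖`. Averaging it against the invariant mean in the weak-star sense gives an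
element of `X**`, which the equivariant projection `P` brings back to some `ξ y ∈ X`. The defect
satisfies a cocycle identity, and left invariance of the mean turns it into
`ξ (v g y) = u g (ξ y) + (u g (Ω y) - Ω (v g y))`, so `ω = Ω + ξ` is equivariant. Everything
in this construction is linear in `y` when `Ω` is.
-/

open NormedSpace

/-- The subspace of bounded real-valued functions on `G` (the domain `ℓ∞(G,ℝ)` of a mean). -/
def bddFuns (G : Type*) : Submodule ℝ (G → ℝ) where
  carrier := {f | ∃ C : ℝ, ∀ g, |f g| ≤ C}
  add_mem' := by
    rintro f g ⟨C, hC⟩ ⟨D, hD⟩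
    exact ⟨C + D, fun x => (abs_add_le _ _).trans (add_le_add (hC x) (hD x))⟩
  zero_mem' := ⟨0, fun g => by simp⟩
  smul_mem' := by
    rintro c f ⟨C, hC⟩
    exact ⟨|c| * C, fun x => by
      rw [Pi.smul_apply, smul_eq_mul, abs_mul]
      exact mul_le_mul_of_nonneg_left (hC x) (abs_nonneg c)⟩

section Mean

variable {G : Type*}

structure IsMean (m : bddFuns G →ₗ[ℝ] ℝ) : Prop where
  map_one : ∀ f : bddFuns G, (∀ g : G, (f : G → ℝ) g = 1) → m f = 1
  nonneg : ∀ f : bddFuns G, (∀ g : G, 0 ≤ (f : G → ℝ) g) → 0 ≤ m f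

def IsLeftInvariant [Mul G] (m : bddFuns G →ₗ[ℝ] ℝ) : Prop :=
  ∀ (g₀ : G) (f f' : bddFuns G), (∀ g : G, (f' : G → ℝ) g = (f : G → ℝ) (g₀ * g)) → m f' = m f

namespace IsMean

variable {m : bddFuns G →ₗ[ℝ] ℝ}

theorem map_const (hm : IsMean m) (f : bddFuns G) (c : ℝ) (hf : ∀ g, (f : G → ℝ) g = c) :
    m f = c := by
  let one : bddFuns G := ⟨1, 1, fun _ => by simp⟩
  have hf_eq : f = c • one := Subtype.ext <| funext fun g => by simp [one, hf]
  rw [hf_eq, map_smul, hm.map_one one fun _ => rfl, smul_eq_mul, mul_one]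

theorem mono (hm : IsMean m) {f f' : bddFuns G} (h : ∀ g, (f : G → ℝ) g ≤ (f' : G → ℝ) g) :
    m f ≤ m f' := by
  have := hm.nonneg (f' - f) fun g => sub_nonneg.2 (h g)
  rwa [map_sub, sub_nonneg] at this

theorem abs_le (hm : IsMean m) (f : bddFuns G) {K : ℝ} (hK : ∀ g, |(f : G → ℝ) g| ≤ K) :
    |m f| ≤ K := by
  let k : bddFuns G := ⟨fun _ => K, |K|, fun _ => le_rfl⟩
  have hupper (f' : bddFuns G) (h : ∀ g, (f' : G → ℝ) g ≤ K) : m f' ≤ K :=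
    hm.map_const k K (fun _ => rfl) ▸ hm.mono h
  refine _root_.abs_le.2 ⟨?_, hupper f fun g => (_root_.abs_le.1 (hK g)).2⟩
  have := hupper (-f) fun g => by simpa [neg_le] using (_root_.abs_le.1 (hK g)).1
  rw [map_neg] at this
  linarith

end IsMean

end Mean

noncomputable section

namespace ContinuousLinearMap

variable {V W : Type*} [SeminormedAddCommGroup V] [NormedSpace ℝ V]
  [SeminormedAddCommGroup W] [NormedSpace ℝ W]

def strongDualMap (T : V →L[ℝ] W) : StrongDual ℝ W →L[ℝ] StrongDual ℝ V :=
  (compL ℝ V W ℝ).flip T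

@[simp]
theorem strongDualMap_apply (T : V →L[ℝ] W) (φ : StrongDual ℝ W) : T.strongDualMap φ = φ.comp T :=
  rfl

-- Instance search does not see through the strong-topology instances on a bidual, so the
-- operator norm structure of `StrongDual ℝ V` is supplied by hand.
theorem bound_of_strongDual_strongDual (P : StrongDual ℝ (StrongDual ℝ V) →L[ℝ] W) :
    ∃ K, 0 < K ∧ ∀ Φ, ‖P Φ‖ ≤ K * ‖Φ‖ := by
  let _ : SeminormedAddCommGroup (StrongDual ℝ V) := toSeminormedAddCommGroup
  let _ : NormedSpace ℝ (StrongDual ℝ V) := toNormedSpace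
  exact P.bound

end ContinuousLinearMap

section WeakMean

variable (G V : Type*) [SeminormedAddCommGroup V] [NormedSpace ℝ V]

def boundedFns : Submodule ℝ (G → V) where
  carrier := {f | ∃ C : ℝ, ∀ g, ‖f g‖ ≤ C}
  add_mem' := by
    rintro f g ⟨C, hC⟩ ⟨D, hD⟩
    exact ⟨C + D, fun x => (norm_add_le _ _).trans (add_le_add (hC x) (hD x))⟩
  zero_mem' := ⟨0, fun g => by simp⟩
  smul_mem' := by
    rintro c f ⟨C, hC⟩
    exact ⟨|c| * C, fun x => by
      rw [Pi.smul_apply, norm_smul, Real.norm_eq_abs]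
      exact mul_le_mul_of_nonneg_left (hC x) (abs_nonneg c)⟩

variable {G V}

theorem abs_apply_le_of_norm_le (φ : StrongDual ℝ V) {f : G → V} {K : ℝ} (hK : ∀ g, ‖f g‖ ≤ K)
    (g : G) : |φ (f g)| ≤ K * ‖φ‖ := by
  rw [mul_comm]
  exact (φ.le_opNorm _).trans (mul_le_mul_of_nonneg_left (hK g) (norm_nonneg φ))

def dualComp (f : boundedFns G V) : StrongDual ℝ V →ₗ[ℝ] bddFuns G where
  toFun φ := ⟨φ ∘ f, f.2.choose * ‖φ‖, abs_apply_le_of_norm_le φ f.2.choose_spec⟩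
  map_add' _ _ := rfl
  map_smul' _ _ := rfl

@[simp]
theorem coe_dualComp_apply (f : boundedFns G V) (φ : StrongDual ℝ V) :
    (dualComp f φ : G → ℝ) = φ ∘ f :=
  rfl

variable {m : bddFuns G →ₗ[ℝ] ℝ}

def weakMean (hm : IsMean m) : boundedFns G V →ₗ[ℝ] StrongDual ℝ (StrongDual ℝ V) where
  toFun f := (m ∘ₗ dualComp f).mkContinuousOfExistsBound <|
    let ⟨K, hK⟩ := f.2
    ⟨K, fun φ => hm.abs_le _ (abs_apply_le_of_norm_le φ hK)⟩
  map_add' f f' := by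
    ext φ
    simp only [add_apply, LinearMap.mkContinuousOfExistsBound_apply,
      LinearMap.comp_apply, ← map_add]
    congr 1
    ext g
    simp
  map_smul' c f := by
    ext φ
    simp only [smul_apply, LinearMap.mkContinuousOfExistsBound_apply,
      LinearMap.comp_apply, RingHom.id_apply, ← map_smul]
    congr 1
    ext g
    simp

variable (hm : IsMean m)

@[simp]
theorem weakMean_apply (f : boundedFns G V) (φ : StrongDual ℝ V) :
    weakMean hm f φ = m (dualComp f φ) :=
  rfl

theorem norm_weakMean_le [Nonempty G] {f : boundedFns G V} {K : ℝ} (hK : ∀ g, ‖(f : G → V) g‖ ≤ K) :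
    ‖weakMean hm f‖ ≤ K := by
  refine ContinuousLinearMap.opNorm_le_bound _ ((norm_nonneg _).trans (hK (Classical.arbitrary G)))
    fun φ => ?_
  exact hm.abs_le _ (abs_apply_le_of_norm_le φ hK)

theorem weakMean_eq_of_forall_eq_add [Group G] (hinv : IsLeftInvariant m) (T : V →L[ℝ] V)
    (g₀ : G) (d : V) {f f' : boundedFns G V}
    (h : ∀ g, (f' : G → V) g = T ((f : G → V) (g₀⁻¹ * g)) + d) :
    weakMean hm f' = T.strongDualMap.strongDualMap (weakMean hm f) + inclusionInDoubleDual ℝ V d := by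
  ext φ
  let shifted : bddFuns G :=
    ⟨fun g => φ (T ((f : G → V) (g₀⁻¹ * g))), (dualComp f (φ.comp T)).2.elim
      fun K hK => ⟨K, fun g => hK (g₀⁻¹ * g)⟩⟩
  let const : bddFuns G := ⟨fun _ => φ d, |φ d|, fun _ => le_rfl⟩
  have hsplit : dualComp f' φ = shifted + const := Subtype.ext <| funext fun g => by
    simp [shifted, const, h]
  have hshifted : m shifted = m (dualComp f (φ.comp T)) := hinv g₀⁻¹ _ _ fun _ => rfl
  simp [hsplit, hshifted, hm.map_const const (φ d) fun _ => rfl]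

end WeakMean

section Centralizer

variable {G E Z : Type*} [Group G] [NormedAddCommGroup E] [NormedSpace ℝ E]
  {u : G → E →L[ℝ] E} {a : G → Z → Z} {Ω : Z → E} {X : Submodule ℝ E}

def centralizerDefect (u : G → E →L[ℝ] E) (a : G → Z → Z) (Ω : Z → E) (z : Z) (g : G) : E :=
  u g (Ω (a g⁻¹ z)) - Ω z

theorem centralizerDefect_act (hu : ∀ g h, u (g * h) = (u g).comp (u h))
    (ha : ∀ g h z, a (g * h) z = a g (a h z)) (g₀ : G) (z : Z) (g : G) :
    centralizerDefect u a Ω (a g₀ z) g =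
      u g₀ (centralizerDefect u a Ω z (g₀⁻¹ * g)) + (u g₀ (Ω z) - Ω (a g₀ z)) := by
  have hu_cancel (x : E) : u g₀ (u (g₀⁻¹ * g) x) = u g x := by
    rw [← ContinuousLinearMap.comp_apply, ← hu, mul_inv_cancel_left]
  simp only [centralizerDefect, mul_inv_rev, inv_inv, map_sub, hu_cancel, ha]
  abel

theorem centralizerDefect_mem (hmem : ∀ g z, u g (Ω z) - Ω (a g z) ∈ X)
    (ha_inv : ∀ g z, a g (a g⁻¹ z) = z) (z : Z) (g : G) : centralizerDefect u a Ω z g ∈ X := by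
  simpa only [centralizerDefect, ha_inv] using hmem g (a g⁻¹ z)

variable [SeminormedAddCommGroup Z] {C M : ℝ}

theorem norm_centralizerDefect_le (hbound : ∀ g z, ‖u g (Ω z) - Ω (a g z)‖ ≤ C * ‖z‖)
    (ha_inv : ∀ g z, a g (a g⁻¹ z) = z) (haM : ∀ g z, ‖a g z‖ ≤ M * ‖z‖) (z : Z) (g : G) :
    ‖centralizerDefect u a Ω z g‖ ≤ |C| * M * ‖z‖ := by
  have h := hbound g (a g⁻¹ z)
  rw [ha_inv] at h
  calc ‖centralizerDefect u a Ω z g‖ ≤ C * ‖a g⁻¹ z‖ := h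
    _ ≤ |C| * ‖a g⁻¹ z‖ := mul_le_mul_of_nonneg_right (le_abs_self C) (norm_nonneg _)
    _ ≤ |C| * M * ‖z‖ := by
      rw [mul_assoc]; exact mul_le_mul_of_nonneg_left (haM _ _) (abs_nonneg C)

section BoundedDefect

variable (hmem : ∀ g z, u g (Ω z) - Ω (a g z) ∈ X)
  (hbound : ∀ g z, ‖u g (Ω z) - Ω (a g z)‖ ≤ C * ‖z‖) (ha_inv : ∀ g z, a g (a g⁻¹ z) = z)
  (haM : ∀ g z, ‖a g z‖ ≤ M * ‖z‖)

def boundedDefect (z : Z) : boundedFns G X :=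
  ⟨fun g => ⟨centralizerDefect u a Ω z g, centralizerDefect_mem hmem ha_inv z g⟩,
    |C| * M * ‖z‖, norm_centralizerDefect_le hbound ha_inv haM z⟩

theorem coe_boundedDefect_apply (z : Z) (g : G) :
    (((boundedDefect hmem hbound ha_inv haM z : G → X) g : X) : E) = centralizerDefect u a Ω z g :=
  rfl

theorem isLinearMap_boundedDefect [NormedSpace ℝ Z] (ha_lin : ∀ g, IsLinearMap ℝ (a g)) (hΩ : IsLinearMap ℝ Ω) :
    IsLinearMap ℝ (boundedDefect hmem hbound ha_inv haM) where
  map_add z z' := Subtype.ext <| funext fun g => Subtype.ext <| by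
    simp only [Submodule.coe_add, Pi.add_apply, coe_boundedDefect_apply, centralizerDefect,
      (ha_lin _).map_add, hΩ.map_add, map_add]
    abel
  map_smul c z := Subtype.ext <| funext fun g => Subtype.ext <| by
    simp only [Submodule.coe_smul, Pi.smul_apply, coe_boundedDefect_apply, centralizerDefect,
      (ha_lin _).map_smul, hΩ.map_smul, map_smul, smul_sub]

end BoundedDefect

variable [NormedSpace ℝ Z]

theorem exists_equivariant_near_centralizer {m : bddFuns G →ₗ[ℝ] ℝ} (hm : IsMean m)
    (hinv : IsLeftInvariant m) (hXinv : ∀ g, ∀ x ∈ X, u g x ∈ X)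
    {P : StrongDual ℝ (StrongDual ℝ X) →L[ℝ] X} (hPj : ∀ x, P (inclusionInDoubleDual ℝ X x) = x)
    (hPu : ∀ g Φ, P (((u g).restrict (hXinv g)).strongDualMap.strongDualMap Φ) =
      (u g).restrict (hXinv g) (P Φ))
    (hu : ∀ g h, u (g * h) = (u g).comp (u h)) (ha : ∀ g h z, a (g * h) z = a g (a h z))
    (ha_inv : ∀ g z, a g (a g⁻¹ z) = z) (haM : ∀ g z, ‖a g z‖ ≤ M * ‖z‖)
    (ha_lin : ∀ g, IsLinearMap ℝ (a g)) (hmem : ∀ g z, u g (Ω z) - Ω (a g z) ∈ X)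
    (hbound : ∀ g z, ‖u g (Ω z) - Ω (a g z)‖ ≤ C * ‖z‖) :
    ∃ ω : Z → E, (∀ g z, u g (ω z) = ω (a g z)) ∧ (∀ z, Ω z - ω z ∈ X) ∧
      (∃ D, ∀ z, ‖z‖ ≤ 1 → ‖Ω z - ω z‖ ≤ D) ∧ (IsLinearMap ℝ Ω → IsLinearMap ℝ ω) := by
  set ξ : Z → X := fun z => P (weakMean hm (boundedDefect hmem hbound ha_inv haM z))
  have hξ_act (g₀ : G) (z : Z) : (ξ (a g₀ z) : E) = u g₀ (ξ z) + (u g₀ (Ω z) - Ω (a g₀ z)) := by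
    have h := weakMean_eq_of_forall_eq_add hm hinv ((u g₀).restrict (hXinv g₀)) g₀
      ⟨_, hmem g₀ z⟩ (f := boundedDefect hmem hbound ha_inv haM z)
      (f' := boundedDefect hmem hbound ha_inv haM (a g₀ z))
      fun g => Subtype.ext (centralizerDefect_act hu ha g₀ z g)
    simp only [ξ, h, map_add, hPu, hPj]
    rfl
  obtain ⟨K, hK, hPK⟩ := P.bound_of_strongDual_strongDual
  have hξ_norm (z : Z) : ‖ξ z‖ ≤ K * (|C| * M * ‖z‖) :=
    (hPK _).trans <| mul_le_mul_of_nonneg_left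
      (norm_weakMean_le hm (norm_centralizerDefect_le hbound ha_inv haM z)) hK.le
  refine ⟨fun z => Ω z + ξ z, fun g z => ?_, fun z => ?_, ⟨K * (|C| * |M|), fun z hz => ?_⟩,
    fun hΩ => ?_⟩
  · show _ = Ω (a g z) + ξ (a g z)
    rw [map_add, hξ_act]
    abel
  · simp
  · calc ‖Ω z - (Ω z + ξ z)‖ = ‖ξ z‖ := by simp
      _ ≤ K * (|C| * M * ‖z‖) := hξ_norm z
      _ ≤ K * (|C| * |M|) := by
        rw [mul_assoc]
        gcongr
        calc M * ‖z‖ ≤ |M| * ‖z‖ := by gcongr; exact le_abs_self M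
          _ ≤ |M| := mul_le_of_le_one_right (abs_nonneg M) hz
  · exact ((hΩ.mk' Ω) + X.subtype ∘ₗ P.toLinearMap ∘ₗ weakMean hm ∘ₗ
      (isLinearMap_boundedDefect hmem hbound ha_inv haM ha_lin hΩ).mk' _).isLinear

end Centralizer

end

theorem stmt_7_general {G : Type*} [Group G]
    {E Y : Type*} [NormedAddCommGroup E] [NormedSpace ℝ E]
    [NormedAddCommGroup Y] [NormedSpace ℝ Y]
    -- amenability of G: existence of a left-invariant mean on ℓ∞(G,ℝ)
    (hamen : ∃ m : bddFuns G →ₗ[ℝ] ℝ,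
      (∀ f : bddFuns G, (∀ g : G, (f : G → ℝ) g = 1) → m f = 1) ∧
      (∀ f : bddFuns G, (∀ g : G, 0 ≤ (f : G → ℝ) g) → 0 ≤ m f) ∧
      (∀ (g₀ : G) (f f' : bddFuns G),
        (∀ g : G, (f' : G → ℝ) g = (f : G → ℝ) (g₀ * g)) → m f' = m f))
    -- bounded representations by invertible operators
    (u : G → E →L[ℝ] E) (v : G → Y →L[ℝ] Y)
    (hu : ∀ g h : G, u (g * h) = (u g).comp (u h))
    (hv : ∀ g h : G, v (g * h) = (v g).comp (v h))
    (hvinv' : ∀ g : G, (v g).comp (v g⁻¹) = ContinuousLinearMap.id ℝ Y)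
    (Mv : ℝ) (hvM : ∀ g : G, ‖v g‖ ≤ Mv)
    -- the closed invariant subspace X of E
    (X : Submodule ℝ E)
    (hXinv : ∀ g : G, ∀ x ∈ X, u g x ∈ X)
    -- X (with the restricted representation) is G-complemented in its bidual
    (hcompl : ∃ P : StrongDual ℝ (StrongDual ℝ ↥X) →L[ℝ] ↥X,
      (∀ x : ↥X, P (inclusionInDoubleDual ℝ ↥X x) = x) ∧
      ∀ (g : G) (wg : ↥X →L[ℝ] ↥X), (∀ x : ↥X, (wg x : E) = u g (x : E)) →
        ∀ wgss : StrongDual ℝ (StrongDual ℝ ↥X) →L[ℝ] StrongDual ℝ (StrongDual ℝ ↥X),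
          (∀ (Φ : StrongDual ℝ (StrongDual ℝ ↥X)) (φ : StrongDual ℝ ↥X), wgss Φ φ = Φ (φ.comp wg)) →
          ∀ Φ : StrongDual ℝ (StrongDual ℝ ↥X), P (wgss Φ) = wg (P Φ))
    -- the dense invariant subspace Y₀₀ of Y
    (Y₀₀ : Submodule ℝ Y)
    (hYinv : ∀ g : G, ∀ y ∈ Y₀₀, v g y ∈ Y₀₀)
    -- Ω is a G-centralizer
    (Ω : ↥Y₀₀ → E) (C : ℝ)
    (hcent : ∀ (g : G) (y y' : ↥Y₀₀), (y' : Y) = v g (y : Y) →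
      u g (Ω y) - Ω y' ∈ X ∧ ‖u g (Ω y) - Ω y'‖ ≤ C * ‖(y : Y)‖) :
    ∃ ω : ↥Y₀₀ → E,
      (∀ (g : G) (y y' : ↥Y₀₀), (y' : Y) = v g (y : Y) → u g (ω y) = ω y') ∧
      (∀ y : ↥Y₀₀, Ω y - ω y ∈ X) ∧
      (∃ D : ℝ, ∀ y : ↥Y₀₀, ‖(y : Y)‖ ≤ 1 → ‖Ω y - ω y‖ ≤ D) ∧
      (IsLinearMap ℝ Ω → IsLinearMap ℝ ω) := by
  obtain ⟨m, hm_one, hm_nonneg, hm_inv⟩ := hamen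
  obtain ⟨P, hPj, hPu⟩ := hcompl
  set a : G → Y₀₀ → Y₀₀ := fun g => (v g).restrict (hYinv g)
  have ha_mul (g h : G) (y : Y₀₀) : a (g * h) y = a g (a h y) := Subtype.ext <| by simp [a, hv]
  have ha_inv (g : G) (y : Y₀₀) : a g (a g⁻¹ y) = y := Subtype.ext <| by
    simpa [a] using congrArg (· (y : Y)) (hvinv' g)
  obtain ⟨ω, hω_equiv, hω_mem, hω_bound, hω_lin⟩ := exists_equivariant_near_centralizer
    ⟨hm_one, hm_nonneg⟩ hm_inv hXinv hPj (fun g => hPu g _ (fun _ => rfl) _ fun _ _ => rfl) hu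
    ha_mul ha_inv (fun g y => (v g).le_of_opNorm_le (hvM g) y)
    (fun g => ((v g).restrict (hYinv g)).toLinearMap.isLinear)
    (fun g y => (hcent g y (a g y) rfl).1) (fun g y => (hcent g y (a g y) rfl).2)
  refine ⟨ω, fun g y y' hy' => ?_, hω_mem, hω_bound, hω_lin⟩
  rw [show y' = a g y from Subtype.ext hy']
  exact hω_equiv g y

/-- if `G` is an amenable group, `X` is `G`-complemented in its bidual,
and `Ω : Y₀₀ → E` is a `G`-centralizer, then `Ω` is at bounded distance from a
`G`-equivariant map `ω`, which can be chosen linear whenever `Ω` is linear. -/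
theorem stmt_7 {G : Type*} [Group G]
    {E Y : Type*} [NormedAddCommGroup E] [NormedSpace ℝ E] [CompleteSpace E]
    [NormedAddCommGroup Y] [NormedSpace ℝ Y] [CompleteSpace Y]
    -- amenability of G: existence of a left-invariant mean on ℓ∞(G,ℝ)
    (hamen : ∃ m : bddFuns G →ₗ[ℝ] ℝ,
      (∀ f : bddFuns G, (∀ g : G, (f : G → ℝ) g = 1) → m f = 1) ∧
      (∀ f : bddFuns G, (∀ g : G, 0 ≤ (f : G → ℝ) g) → 0 ≤ m f) ∧
      (∀ (g₀ : G) (f f' : bddFuns G),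
        (∀ g : G, (f' : G → ℝ) g = (f : G → ℝ) (g₀ * g)) → m f' = m f))
    -- bounded representations by invertible operators
    (u : G → E →L[ℝ] E) (v : G → Y →L[ℝ] Y)
    (hu : ∀ g h : G, u (g * h) = (u g).comp (u h))
    (hv : ∀ g h : G, v (g * h) = (v g).comp (v h))
    (huinv : ∀ g : G, (u g⁻¹).comp (u g) = ContinuousLinearMap.id ℝ E)
    (huinv' : ∀ g : G, (u g).comp (u g⁻¹) = ContinuousLinearMap.id ℝ E)
    (hvinv : ∀ g : G, (v g⁻¹).comp (v g) = ContinuousLinearMap.id ℝ Y)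
    (hvinv' : ∀ g : G, (v g).comp (v g⁻¹) = ContinuousLinearMap.id ℝ Y)
    (Mu : ℝ) (huM : ∀ g : G, ‖u g‖ ≤ Mu) (Mv : ℝ) (hvM : ∀ g : G, ‖v g‖ ≤ Mv)
    -- the closed invariant subspace X of E
    (X : Submodule ℝ E) (hXc : IsClosed (X : Set E))
    (hXinv : ∀ g : G, ∀ x ∈ X, u g x ∈ X)
    -- X (with the restricted representation) is G-complemented in its bidual
    (hcompl : ∃ P : StrongDual ℝ (StrongDual ℝ ↥X) →L[ℝ] ↥X,
      (∀ x : ↥X, P (inclusionInDoubleDual ℝ ↥X x) = x) ∧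
      ∀ (g : G) (wg : ↥X →L[ℝ] ↥X), (∀ x : ↥X, (wg x : E) = u g (x : E)) →
        ∀ wgss : StrongDual ℝ (StrongDual ℝ ↥X) →L[ℝ] StrongDual ℝ (StrongDual ℝ ↥X),
          (∀ (Φ : StrongDual ℝ (StrongDual ℝ ↥X)) (φ : StrongDual ℝ ↥X), wgss Φ φ = Φ (φ.comp wg)) →
          ∀ Φ : StrongDual ℝ (StrongDual ℝ ↥X), P (wgss Φ) = wg (P Φ))
    -- the dense invariant subspace Y₀₀ of Y
    (Y₀₀ : Submodule ℝ Y) (hdense : Dense (Y₀₀ : Set Y))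
    (hYinv : ∀ g : G, ∀ y ∈ Y₀₀, v g y ∈ Y₀₀)
    -- Ω is a G-centralizer
    (Ω : ↥Y₀₀ → E) (C : ℝ)
    (hcent : ∀ (g : G) (y y' : ↥Y₀₀), (y' : Y) = v g (y : Y) →
      u g (Ω y) - Ω y' ∈ X ∧ ‖u g (Ω y) - Ω y'‖ ≤ C * ‖(y : Y)‖) :
    ∃ ω : ↥Y₀₀ → E,
      (∀ (g : G) (y y' : ↥Y₀₀), (y' : Y) = v g (y : Y) → u g (ω y) = ω y') ∧
      (∀ y : ↥Y₀₀, Ω y - ω y ∈ X) ∧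
      (∃ D : ℝ, ∀ y : ↥Y₀₀, ‖(y : Y)‖ ≤ 1 → ‖Ω y - ω y‖ ≤ D) ∧
      (IsLinearMap ℝ Ω → IsLinearMap ℝ ω) :=
  stmt_7_general hamen u v hu hv hvinv' Mv hvM X hXinv hcompl Y₀₀ hYinv Ω C hcent
end

section
/- Let (S, μ) be a σ-finite measure space, 1 ≤ p < ∞, and let T f = ε·w^{1/p}·(f∘φ) be a Banach–Lamperti operator on L_p(μ) (with φ a bimeasurable bijection of S, w ≥ 0 measurable satisfying ∫ (g∘φ)·w dμ = ∫ g dμ for all measurable g ≥ 0, and |ε| = 1 a.e.). Then: (1) T is a linear isometry of L_p(μ): ‖T f‖_p = ‖f‖_p for every f ∈ L_p(μ); (2) for every f ∈ L_p(μ), the Kalton–Peck map K satisfies the commutator identity K(T f) = T̄(K f) + (1/p)·(log w)·(T f) almost everywhere, where T̄ h = ε·w^{1/p}·(h∘φ) is the extension of T to measurable functions and the last term is interpreted as 0 at points where (T f)(s) = 0 (in particular where w(s) = 0). -/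
open MeasureTheory
open scoped ENNReal

/-- The Kalton–Peck map `K f = f · log(|f| / ‖f‖_p)`, defined pointwise (with the
conventions `0·log 0 = 0` and `K 0 = 0`, automatic here since `Real.log 0 = 0`). -/
noncomputable def kaltonPeck {S : Type*} [MeasurableSpace S] (p : ℝ) (μ : Measure S)
    (f : S → ℝ) : S → ℝ :=
  fun s => f s * Real.log (|f s| / (eLpNorm f (ENNReal.ofReal p) μ).toReal)

/-!
The hypothesis `∫ (g ∘ φ) w dμ = ∫ g dμ` says that `φ` carries `w · μ` onto `μ`. Applied to
`g = |f|^p`, together with `|ε| = 1` and `(w^{1/p})^p = w`, it gives `‖T f‖_p = ‖f‖_p`. Applied to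
null sets, it shows that `f ∘ φ` is determined a.e. off `{w = 0}`, where `T f` vanishes anyway, so
`T` respects a.e. equality. Pointwise `|T f| = w^{1/p} |f ∘ φ|`, so the logarithm in `K (T f)`
splits off `(1/p) log w`; when `‖f‖_p = 0`, both sides vanish a.e.
-/

theorem mul_log_abs_rpow_mul_div {p a b x c : ℝ} (hp : p ≠ 0) (ha : |a| = 1) (hb : 0 ≤ b)
    (hc : c ≠ 0 ∨ a * b ^ (1 / p) * x = 0) :
    a * b ^ (1 / p) * x * Real.log (|a * b ^ (1 / p) * x| / c)
      = a * b ^ (1 / p) * (x * Real.log (|x| / c))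
        + if a * b ^ (1 / p) * x = 0 then 0
          else 1 / p * Real.log b * (a * b ^ (1 / p) * x) := by
  by_cases hT : a * b ^ (1 / p) * x = 0
  · rw [if_pos hT, ← mul_assoc, hT]
    simp
  have hc : c ≠ 0 := hc.resolve_right hT
  have hb0 : 0 < b := hb.lt_of_ne' (by rintro rfl; simp [hp] at hT)
  have hbp : 0 < b ^ (1 / p) := Real.rpow_pos_of_pos hb0 _
  have hx : x ≠ 0 := by rintro rfl; simp at hT
  have hlog : Real.log (|a * b ^ (1 / p) * x| / c) = 1 / p * Real.log b + Real.log (|x| / c) := by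
    rw [abs_mul, abs_mul, ha, one_mul, abs_of_pos hbp, mul_div_assoc,
      Real.log_mul hbp.ne' (div_ne_zero (abs_ne_zero.mpr hx) hc), Real.log_rpow hb0]
  rw [if_neg hT, hlog]
  ring

section Lamperti

variable {S : Type*} [MeasurableSpace S] {μ : Measure S} {φ : S ≃ᵐ S}

theorem map_withDensity_eq_of_lintegral_comp_mul {ρ : S → ℝ≥0∞}
    (h : ∀ g : S → ℝ≥0∞, Measurable g → ∫⁻ s, g (φ s) * ρ s ∂μ = ∫⁻ s, g s ∂μ) :
    (μ.withDensity ρ).map φ = μ := by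
  ext t ht
  have hφt : MeasurableSet (φ ⁻¹' t) := φ.measurable ht
  calc (μ.withDensity ρ).map φ t = ∫⁻ s, (φ ⁻¹' t).indicator ρ s ∂μ := by
        rw [Measure.map_apply φ.measurable ht, withDensity_apply _ hφt, lintegral_indicator hφt]
    _ = ∫⁻ s, t.indicator 1 (φ s) * ρ s ∂μ := by
        congr 1 with s
        by_cases hs : φ s ∈ t <;> simp [Set.indicator, hs]
    _ = μ t := by rw [h _ (measurable_one.indicator ht), lintegral_indicator_one ht]

theorem ae_comp_of_map_withDensity_eq {ρ : S → ℝ≥0∞} (hρ : Measurable ρ)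
    (h : (μ.withDensity ρ).map φ = μ) {P : S → Prop} (hP : ∀ᵐ x ∂μ, P x) :
    ∀ᵐ s ∂μ, ρ s ≠ 0 → P (φ s) := by
  rw [← h, φ.measurableEmbedding.ae_map_iff] at hP
  exact (ae_withDensity_iff hρ).1 hP

noncomputable def lamperti (p : ℝ) (φ : S ≃ᵐ S) (w ε f : S → ℝ) : S → ℝ :=
  fun s => ε s * w s ^ (1 / p) * f (φ s)

variable {p : ℝ} {w ε f g : S → ℝ}

theorem lamperti_ae_eq (hp : p ≠ 0) (hw : Measurable w) (hw0 : ∀ s, 0 ≤ w s)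
    (hpush : ∀ g : S → ℝ≥0∞, Measurable g →
      ∫⁻ s, g (φ s) * ENNReal.ofReal (w s) ∂μ = ∫⁻ s, g s ∂μ)
    (hfg : f =ᵐ[μ] g) : lamperti p φ w ε f =ᵐ[μ] lamperti p φ w ε g := by
  filter_upwards [ae_comp_of_map_withDensity_eq hw.ennreal_ofReal
    (map_withDensity_eq_of_lintegral_comp_mul hpush) hfg] with s hs
  by_cases hws : w s = 0
  · simp [lamperti, hws, hp]
  · simp [lamperti, hs (by simpa using (hw0 s).lt_of_ne' hws)]

theorem aestronglyMeasurable_lamperti (hp : p ≠ 0) (hw : Measurable w) (hw0 : ∀ s, 0 ≤ w s)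
    (hpush : ∀ g : S → ℝ≥0∞, Measurable g →
      ∫⁻ s, g (φ s) * ENNReal.ofReal (w s) ∂μ = ∫⁻ s, g s ∂μ)
    (hε : Measurable ε) (hf : AEStronglyMeasurable f μ) :
    AEStronglyMeasurable (lamperti p φ w ε f) μ := by
  have hmeas : Measurable (lamperti p φ w ε (hf.mk f)) :=
    (hε.mul (hw.pow_const _)).mul (hf.stronglyMeasurable_mk.measurable.comp φ.measurable)
  exact hmeas.aestronglyMeasurable.congr (lamperti_ae_eq hp hw hw0 hpush hf.ae_eq_mk).symm

theorem enorm_lamperti_rpow {s : S} (hp : 0 < p) (hws : 0 ≤ w s) (hεs : |ε s| = 1) :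
    ‖lamperti p φ w ε f s‖ₑ ^ p = ‖f (φ s)‖ₑ ^ p * ENNReal.ofReal (w s) := by
  have hwp : 0 ≤ w s ^ (1 / p) := Real.rpow_nonneg hws _
  have habs : |lamperti p φ w ε f s| ^ p = |f (φ s)| ^ p * w s := by
    rw [lamperti, abs_mul, abs_mul, hεs, one_mul, abs_of_nonneg hwp,
      Real.mul_rpow hwp (abs_nonneg _), ← Real.rpow_mul hws, one_div_mul_cancel hp.ne',
      Real.rpow_one, mul_comm]
  rw [Real.enorm_eq_ofReal_abs, Real.enorm_eq_ofReal_abs,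
    ENNReal.ofReal_rpow_of_nonneg (abs_nonneg _) hp.le,
    ENNReal.ofReal_rpow_of_nonneg (abs_nonneg _) hp.le,
    ← ENNReal.ofReal_mul (by positivity), habs]

theorem lintegral_enorm_lamperti_rpow (hp : 0 < p) (hw0 : ∀ s, 0 ≤ w s)
    (hpush : ∀ g : S → ℝ≥0∞, Measurable g →
      ∫⁻ s, g (φ s) * ENNReal.ofReal (w s) ∂μ = ∫⁻ s, g s ∂μ)
    (hε1 : ∀ᵐ s ∂μ, |ε s| = 1) (hf : Measurable f) :
    ∫⁻ s, ‖lamperti p φ w ε f s‖ₑ ^ p ∂μ = ∫⁻ s, ‖f s‖ₑ ^ p ∂μ := by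
  rw [← hpush _ (hf.enorm.pow_const p)]
  exact lintegral_congr_ae (hε1.mono fun s hs => enorm_lamperti_rpow hp (hw0 s) hs)

theorem eLpNorm_lamperti (hp : 0 < p) (hw : Measurable w) (hw0 : ∀ s, 0 ≤ w s)
    (hpush : ∀ g : S → ℝ≥0∞, Measurable g →
      ∫⁻ s, g (φ s) * ENNReal.ofReal (w s) ∂μ = ∫⁻ s, g s ∂μ)
    (hε1 : ∀ᵐ s ∂μ, |ε s| = 1) (hf : AEStronglyMeasurable f μ) :
    eLpNorm (lamperti p φ w ε f) (ENNReal.ofReal p) μ = eLpNorm f (ENNReal.ofReal p) μ := by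
  have hq0 : ENNReal.ofReal p ≠ 0 := (ENNReal.ofReal_pos.mpr hp).ne'
  rw [eLpNorm_congr_ae (lamperti_ae_eq hp.ne' hw hw0 hpush hf.ae_eq_mk), eLpNorm_congr_ae hf.ae_eq_mk,
    eLpNorm_eq_lintegral_rpow_enorm_toReal hq0 ENNReal.ofReal_ne_top,
    eLpNorm_eq_lintegral_rpow_enorm_toReal hq0 ENNReal.ofReal_ne_top,
    ENNReal.toReal_ofReal hp.le,
    lintegral_enorm_lamperti_rpow hp hw0 hpush hε1 hf.stronglyMeasurable_mk.measurable]

theorem memLp_lamperti (hp : 0 < p) (hw : Measurable w) (hw0 : ∀ s, 0 ≤ w s)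
    (hpush : ∀ g : S → ℝ≥0∞, Measurable g →
      ∫⁻ s, g (φ s) * ENNReal.ofReal (w s) ∂μ = ∫⁻ s, g s ∂μ)
    (hε : Measurable ε) (hε1 : ∀ᵐ s ∂μ, |ε s| = 1) (hf : MemLp f (ENNReal.ofReal p) μ) :
    MemLp (lamperti p φ w ε f) (ENNReal.ofReal p) μ :=
  ⟨aestronglyMeasurable_lamperti hp.ne' hw hw0 hpush hε hf.1,
    by rw [eLpNorm_lamperti hp hw hw0 hpush hε1 hf.1]; exact hf.2⟩

theorem kaltonPeck_lamperti_ae (hp : 0 < p) (hw : Measurable w) (hw0 : ∀ s, 0 ≤ w s)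
    (hpush : ∀ g : S → ℝ≥0∞, Measurable g →
      ∫⁻ s, g (φ s) * ENNReal.ofReal (w s) ∂μ = ∫⁻ s, g s ∂μ)
    (hε1 : ∀ᵐ s ∂μ, |ε s| = 1) (hf : MemLp f (ENNReal.ofReal p) μ) :
    ∀ᵐ s ∂μ, kaltonPeck p μ (lamperti p φ w ε f) s
      = ε s * w s ^ (1 / p) * kaltonPeck p μ f (φ s)
        + if lamperti p φ w ε f s = 0 then 0
          else 1 / p * Real.log (w s) * lamperti p φ w ε f s := by
  have hT0 : ∀ᵐ s ∂μ, (eLpNorm f (ENNReal.ofReal p) μ).toReal ≠ 0 ∨ lamperti p φ w ε f s = 0 := by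
    by_cases hc : (eLpNorm f (ENNReal.ofReal p) μ).toReal = 0
    · have hf0 : f =ᵐ[μ] 0 := (eLpNorm_eq_zero_iff hf.1 (ENNReal.ofReal_pos.mpr hp).ne').1
        (((ENNReal.toReal_eq_zero_iff _).1 hc).resolve_right hf.eLpNorm_ne_top)
      filter_upwards [lamperti_ae_eq (ε := ε) hp.ne' hw hw0 hpush hf0] with s hs
      exact .inr (hs.trans (by simp [lamperti]))
    · exact .of_forall fun _ => .inl hc
  filter_upwards [hε1, hT0] with s hεs hs
  rw [kaltonPeck, kaltonPeck, eLpNorm_lamperti hp hw hw0 hpush hε1 hf.1]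
  exact mul_log_abs_rpow_mul_div hp.ne' hεs (hw0 s) hs

end Lamperti

theorem stmt_10_general {S : Type*} [MeasurableSpace S] (μ : Measure S)
    (p : ℝ) (hp : 1 ≤ p)
    (φ : S ≃ᵐ S) (w : S → ℝ) (hw : Measurable w) (hw0 : ∀ s, 0 ≤ w s)
    (hpush : ∀ g : S → ℝ≥0∞, Measurable g →
      ∫⁻ s, g (φ s) * ENNReal.ofReal (w s) ∂μ = ∫⁻ s, g s ∂μ)
    (ε : S → ℝ) (hε : Measurable ε) (hε1 : ∀ᵐ s ∂μ, |ε s| = 1)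
    (f : S → ℝ) (hf : MemLp f (ENNReal.ofReal p) μ) :
    MemLp (fun s => ε s * w s ^ (1 / p) * f (φ s)) (ENNReal.ofReal p) μ ∧
    eLpNorm (fun s => ε s * w s ^ (1 / p) * f (φ s)) (ENNReal.ofReal p) μ
      = eLpNorm f (ENNReal.ofReal p) μ ∧
    (∀ᵐ s ∂μ,
      kaltonPeck p μ (fun t => ε t * w t ^ (1 / p) * f (φ t)) s
        = ε s * w s ^ (1 / p) * kaltonPeck p μ f (φ s)
          + (if ε s * w s ^ (1 / p) * f (φ s) = 0 then 0
             else (1 / p) * Real.log (w s) * (ε s * w s ^ (1 / p) * f (φ s)))) := by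
  have hp0 : 0 < p := by linarith
  exact ⟨memLp_lamperti hp0 hw hw0 hpush hε hε1 hf, eLpNorm_lamperti hp0 hw hw0 hpush hε1 hf.1,
    kaltonPeck_lamperti_ae hp0 hw hw0 hpush hε1 hf⟩

/-- a Banach–Lamperti operator `T f = ε·w^{1/p}·(f∘φ)` is a linear
isometry of `L_p(μ)`, and the Kalton–Peck map satisfies the commutator identity
`K(T f) = T̄(K f) + (1/p)·(log w)·(T f)` almost everywhere. -/
theorem stmt_10 {S : Type*} [MeasurableSpace S] (μ : Measure S) [SigmaFinite μ]
    (p : ℝ) (hp : 1 ≤ p)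
    (φ : S ≃ᵐ S) (w : S → ℝ) (hw : Measurable w) (hw0 : ∀ s, 0 ≤ w s)
    (hpush : ∀ g : S → ℝ≥0∞, Measurable g →
      ∫⁻ s, g (φ s) * ENNReal.ofReal (w s) ∂μ = ∫⁻ s, g s ∂μ)
    (ε : S → ℝ) (hε : Measurable ε) (hε1 : ∀ᵐ s ∂μ, |ε s| = 1)
    (f : S → ℝ) (hf : MemLp f (ENNReal.ofReal p) μ) :
    MemLp (fun s => ε s * w s ^ (1 / p) * f (φ s)) (ENNReal.ofReal p) μ ∧
    eLpNorm (fun s => ε s * w s ^ (1 / p) * f (φ s)) (ENNReal.ofReal p) μ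
      = eLpNorm f (ENNReal.ofReal p) μ ∧
    (∀ᵐ s ∂μ,
      kaltonPeck p μ (fun t => ε t * w t ^ (1 / p) * f (φ t)) s
        = ε s * w s ^ (1 / p) * kaltonPeck p μ f (φ s)
          + (if ε s * w s ^ (1 / p) * f (φ s) = 0 then 0
             else (1 / p) * Real.log (w s) * (ε s * w s ^ (1 / p) * f (φ s)))) :=
  stmt_10_general μ p hp φ w hw hw0 hpush ε hε hε1 f hf
end

section
/- For every 1 ≤ p < ∞, the Kalton–Peck map K on L_p(0,1) is not a centralizer for the group of surjective linear isometries of L_p(0,1): for every constant C > 0 there exist a surjective linear isometry T of L_p(0,1) and a function f ∈ L_p(0,1) with ‖f‖_p = 1 such that K f ∈ L_p(0,1), K(T f) ∈ L_p(0,1), and ‖K(T f) − T(K f)‖_p > C. -/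
/-!
Normalized indicators `e_c = c^(-1/p) 1_(0,c)` are eigenvectors of the Kalton–Peck map:
`K e_c = -(log c / p) e_c`. For `a, b ∈ (0,1)` let `ψ` be the piecewise affine bijection of
`(0,1)` with `ψ a = b`. By the change of variables formula, `T f = (ψ')^(1/p) · f ∘ ψ` is a
surjective linear isometry of `L_p(0,1)`, and it sends `e_b` to `e_a`. Hence
`K (T e_b) - T (K e_b) = (log (b / a) / p) e_a`, whose norm is unbounded as `a → 0`.
-/

open MeasureTheory

/-- The Kalton–Peck map applied to an element of `L_p`:
`K f = f · log(|f| / ‖f‖_p)`, defined pointwise on (a representative of) `f`. -/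
noncomputable def kaltonPeckLp {α : Type*} [MeasurableSpace α] {μ : Measure α}
    {P : ENNReal} (f : Lp ℝ P μ) : α → ℝ :=
  fun s => f s * Real.log (|f s| / ‖f‖)

open Set
open scoped ENNReal

noncomputable def pwAffineSlope (a b x : ℝ) : ℝ := if x < a then b / a else (1 - b) / (1 - a)

noncomputable def pwAffine (a b x : ℝ) : ℝ := b + pwAffineSlope a b x * (x - a)

section PwAffine

variable {a b : ℝ}

lemma pwAffineSlope_pos (ha : a ∈ Ioo (0 : ℝ) 1) (hb : b ∈ Ioo (0 : ℝ) 1) (x : ℝ) :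
    0 < pwAffineSlope a b x := by
  unfold pwAffineSlope
  split_ifs
  · exact div_pos hb.1 ha.1
  · exact div_pos (sub_pos.2 hb.2) (sub_pos.2 ha.2)

lemma pwAffine_self (a b : ℝ) : pwAffine a b a = b := by simp [pwAffine]

lemma pwAffine_zero (ha : 0 < a) (b : ℝ) : pwAffine a b 0 = 0 := by
  simp only [pwAffine, pwAffineSlope, if_pos ha]
  field_simp; ring

lemma pwAffine_one (ha : a < 1) (b : ℝ) : pwAffine a b 1 = 1 := by
  have : (1 : ℝ) - a ≠ 0 := (sub_pos.2 ha).ne'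
  simp only [pwAffine, pwAffineSlope, if_neg ha.not_gt]
  field_simp; ring

lemma strictMono_pwAffine (ha : a ∈ Ioo (0 : ℝ) 1) (hb : b ∈ Ioo (0 : ℝ) 1) :
    StrictMono (pwAffine a b) := by
  intro x y hxy
  have hx := pwAffineSlope_pos ha hb x
  have hy := pwAffineSlope_pos ha hb y
  simp only [pwAffine]
  by_cases hxa : x < a <;> by_cases hya : y < a
  · have : pwAffineSlope a b x = pwAffineSlope a b y := by simp [pwAffineSlope, hxa, hya]
    rw [this] at hx ⊢
    nlinarith
  · nlinarith
  · exact absurd (hxy.trans hya) hxa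
  · have : pwAffineSlope a b x = pwAffineSlope a b y := by simp [pwAffineSlope, hxa, hya]
    rw [this] at hx ⊢
    nlinarith

lemma pwAffine_lt_iff (ha : a ∈ Ioo (0 : ℝ) 1) (hb : b ∈ Ioo (0 : ℝ) 1) {x : ℝ} :
    pwAffine a b x < b ↔ x < a := by
  simpa only [pwAffine_self] using (strictMono_pwAffine ha hb).lt_iff_lt (a := x) (b := a)

lemma pwAffine_pwAffine (ha : a ∈ Ioo (0 : ℝ) 1) (hb : b ∈ Ioo (0 : ℝ) 1) (x : ℝ) :
    pwAffine b a (pwAffine a b x) = x := by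
  have h1a : (1 : ℝ) - a ≠ 0 := (sub_pos.2 ha.2).ne'
  have h1b : (1 : ℝ) - b ≠ 0 := (sub_pos.2 hb.2).ne'
  have := ha.1.ne'
  have := hb.1.ne'
  by_cases hx : x < a
  · have hx' := (pwAffine_lt_iff ha hb).2 hx
    simp only [pwAffine, pwAffineSlope, if_pos hx] at hx' ⊢
    rw [if_pos hx']
    field_simp; ring
  · have hx' := mt (pwAffine_lt_iff ha hb).1 hx
    simp only [pwAffine, pwAffineSlope, if_neg hx] at hx' ⊢
    rw [if_neg hx']
    field_simp; ring

lemma pwAffineSlope_mul_pwAffineSlope (ha : a ∈ Ioo (0 : ℝ) 1) (hb : b ∈ Ioo (0 : ℝ) 1)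
    (x : ℝ) : pwAffineSlope a b x * pwAffineSlope b a (pwAffine a b x) = 1 := by
  have h1a : (1 : ℝ) - a ≠ 0 := (sub_pos.2 ha.2).ne'
  have h1b : (1 : ℝ) - b ≠ 0 := (sub_pos.2 hb.2).ne'
  have := ha.1.ne'
  have := hb.1.ne'
  by_cases hx : x < a
  · simp only [pwAffineSlope, if_pos hx, if_pos ((pwAffine_lt_iff ha hb).2 hx)]
    field_simp
  · simp only [pwAffineSlope, if_neg hx, if_neg (mt (pwAffine_lt_iff ha hb).1 hx)]
    field_simp

lemma hasDerivAt_pwAffine {x : ℝ} (hx : x ≠ a) :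
    HasDerivAt (pwAffine a b) (pwAffineSlope a b x) x := by
  have hline (c : ℝ) : HasDerivAt (fun y => b + c * (y - a)) c x := by
    simpa using (((hasDerivAt_id x).sub_const a).const_mul c).const_add b
  rcases hx.lt_or_gt with hx | hx
  · refine (hline _).congr_of_eventuallyEq ?_
    filter_upwards [Iio_mem_nhds hx] with y hy
    simp [pwAffine, pwAffineSlope, hx, show y < a from hy]
  · refine (hline _).congr_of_eventuallyEq ?_
    filter_upwards [Ioi_mem_nhds hx] with y hy
    simp [pwAffine, pwAffineSlope, hx.not_gt, (show a < y from hy).not_gt]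

lemma pwAffine_mem_Ioo_zero_iff (ha : a ∈ Ioo (0 : ℝ) 1) (hb : b ∈ Ioo (0 : ℝ) 1) {x : ℝ} :
    pwAffine a b x ∈ Ioo 0 b ↔ x ∈ Ioo 0 a := by
  have h := strictMono_pwAffine ha hb
  simpa only [mem_Ioo, pwAffine_zero ha.1, pwAffine_self] using
    and_congr (h.lt_iff_lt (a := 0) (b := x)) (h.lt_iff_lt (a := x) (b := a))

lemma pwAffine_mapsTo (ha : a ∈ Ioo (0 : ℝ) 1) (hb : b ∈ Ioo (0 : ℝ) 1) :
    MapsTo (pwAffine a b) (Ioo 0 1) (Ioo 0 1) := by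
  intro x hx
  have h := strictMono_pwAffine ha hb
  rw [← pwAffine_zero ha.1 b, ← pwAffine_one ha.2 b]
  exact ⟨h hx.1, h hx.2⟩

lemma image_pwAffine_Ioo (ha : a ∈ Ioo (0 : ℝ) 1) (hb : b ∈ Ioo (0 : ℝ) 1) :
    pwAffine a b '' Ioo 0 1 = Ioo 0 1 :=
  (pwAffine_mapsTo ha hb).image_subset.antisymm fun y hy =>
    ⟨pwAffine b a y, pwAffine_mapsTo hb ha hy, pwAffine_pwAffine hb ha y⟩

lemma map_withDensity_pwAffineSlope (ha : a ∈ Ioo (0 : ℝ) 1) (hb : b ∈ Ioo (0 : ℝ) 1) :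
    ((volume.restrict (Ioo (0 : ℝ) 1)).withDensity
        fun x => ENNReal.ofReal (pwAffineSlope a b x)).map (pwAffine a b) =
      volume.restrict (Ioo 0 1) := by
  have hs : MeasurableSet (Ioo (0 : ℝ) 1 \ {a}) :=
    measurableSet_Ioo.diff (measurableSet_singleton a)
  have key := map_withDensity_abs_det_fderiv_eq_addHaar volume hs.nullMeasurableSet
    (fun x hx => (hasDerivAt_pwAffine (b := b) hx.2).hasFDerivAt.hasFDerivWithinAt)
    ((strictMono_pwAffine ha hb).injective.injOn)
  simp only [ContinuousLinearMap.det_toSpanSingleton,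
    abs_of_pos (pwAffineSlope_pos ha hb _)] at key
  rwa [image_sdiff (strictMono_pwAffine ha hb).injective, image_singleton, pwAffine_self,
    image_pwAffine_Ioo ha hb,
    Measure.restrict_congr_set (sdiff_null_ae_eq_self (measure_singleton _)),
    Measure.restrict_congr_set (sdiff_null_ae_eq_self (measure_singleton _))] at key

end PwAffine

/-- `σ` pushes `|w|^p μ` forward to `ν`; by change of variables this makes `f ↦ w · f ∘ σ` an
isometry `L_p(ν) → L_p(μ)` for finite `p`. -/
structure IsIsometricWeightedComp {α β : Type*} [MeasurableSpace α] [MeasurableSpace β]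
    (p : ℝ≥0∞) (μ : Measure α) (ν : Measure β) (σ : α → β) (w : α → ℝ) : Prop where
  measurable_comp : Measurable σ
  measurable_weight : Measurable w
  ae_weight_ne_zero : ∀ᵐ x ∂μ, w x ≠ 0
  map_withDensity : (μ.withDensity fun x => ‖w x‖ₑ ^ p.toReal).map σ = ν

namespace IsIsometricWeightedComp

variable {α β : Type*} [MeasurableSpace α] [MeasurableSpace β] {p : ℝ≥0∞} {μ : Measure α}
  {ν : Measure β} {σ : α → β} {τ : β → α} {w : α → ℝ} {v : β → ℝ}

lemma quasiMeasurePreserving (h : IsIsometricWeightedComp p μ ν σ w) :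
    Measure.QuasiMeasurePreserving σ μ ν := by
  refine ⟨h.measurable_comp, ?_⟩
  conv_rhs => rw [← h.map_withDensity]
  refine (withDensity_absolutelyContinuous' ?_ ?_).map h.measurable_comp
  · exact (h.measurable_weight.enorm.pow_const _).aemeasurable
  · filter_upwards [h.ae_weight_ne_zero] with x hx
    simp [ENNReal.rpow_eq_zero_iff, hx]

lemma lintegral_weight_mul_comp (h : IsIsometricWeightedComp p μ ν σ w) {F : β → ℝ≥0∞}
    (hF : AEMeasurable F ν) :
    ∫⁻ x, ‖w x‖ₑ ^ p.toReal * F (σ x) ∂μ = ∫⁻ y, F y ∂ν := by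
  rw [← h.map_withDensity] at hF ⊢
  rw [lintegral_map' hF h.measurable_comp.aemeasurable]
  exact (lintegral_withDensity_eq_lintegral_mul₀'
    (h.measurable_weight.enorm.pow_const _).aemeasurable
      (hF.comp_aemeasurable h.measurable_comp.aemeasurable)).symm

lemma eLpNorm_weight_mul_comp (h : IsIsometricWeightedComp p μ ν σ w) (hp : p ≠ 0)
    (hp_top : p ≠ ∞) {f : β → ℝ} (hf : AEStronglyMeasurable f ν) :
    eLpNorm (fun x => w x * f (σ x)) p μ = eLpNorm f p ν := by
  simp only [eLpNorm_eq_lintegral_rpow_enorm_toReal hp hp_top, enorm_mul,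
    ENNReal.mul_rpow_of_nonneg _ _ ENNReal.toReal_nonneg]
  rw [h.lintegral_weight_mul_comp (hf.enorm.pow_const _)]

lemma memLp_weight_mul_comp (h : IsIsometricWeightedComp p μ ν σ w) (hp : p ≠ 0)
    (hp_top : p ≠ ∞) {f : β → ℝ} (hf : MemLp f p ν) :
    MemLp (fun x => w x * f (σ x)) p μ :=
  ⟨h.measurable_weight.aestronglyMeasurable.mul
      (hf.1.comp_quasiMeasurePreserving h.quasiMeasurePreserving),
    by rw [h.eLpNorm_weight_mul_comp hp hp_top hf.1]; exact hf.2⟩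

lemma weight_mul_comp_ae_eq (h : IsIsometricWeightedComp p μ ν σ w) {f g : β → ℝ}
    (hfg : f =ᵐ[ν] g) : (fun x => w x * f (σ x)) =ᵐ[μ] fun x => w x * g (σ x) := by
  filter_upwards [h.quasiMeasurePreserving.ae_eq hfg] with x hx
  rw [Function.comp_apply, Function.comp_apply] at hx
  rw [hx]

variable [Fact (1 ≤ p)]

noncomputable def toLp (h : IsIsometricWeightedComp p μ ν σ w) (hp_top : p ≠ ∞) :
    Lp ℝ p ν →ₗᵢ[ℝ] Lp ℝ p μ where
  toFun f := (h.memLp_weight_mul_comp (zero_lt_one.trans_le Fact.out).ne' hp_top (Lp.memLp f)).toLp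
  map_add' f g := by
    rw [← MemLp.toLp_add]
    refine MemLp.toLp_congr _ _ ?_
    filter_upwards [h.weight_mul_comp_ae_eq (Lp.coeFn_add f g)] with x hx
    rw [hx]
    simp only [Pi.add_apply, mul_add]
  map_smul' c f := by
    rw [RingHom.id_apply, ← MemLp.toLp_const_smul]
    refine MemLp.toLp_congr _ _ ?_
    filter_upwards [h.weight_mul_comp_ae_eq (Lp.coeFn_smul c f)] with x hx
    rw [hx]
    simp only [Pi.smul_apply, smul_eq_mul]
    ring
  norm_map' f := by
    simp only [LinearMap.coe_mk, AddHom.coe_mk, Lp.norm_toLp]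
    rw [h.eLpNorm_weight_mul_comp (zero_lt_one.trans_le Fact.out).ne' hp_top
      (Lp.aestronglyMeasurable f)]
    rfl

lemma coeFn_toLp (h : IsIsometricWeightedComp p μ ν σ w) (hp_top : p ≠ ∞) (f : Lp ℝ p ν) :
    h.toLp hp_top f =ᵐ[μ] fun x => w x * f (σ x) :=
  MemLp.coeFn_toLp (h.memLp_weight_mul_comp (zero_lt_one.trans_le Fact.out).ne' hp_top (Lp.memLp f))

lemma surjective_toLp (h : IsIsometricWeightedComp p μ ν σ w)
    (h' : IsIsometricWeightedComp p ν μ τ v) (hp_top : p ≠ ∞) (hτσ : ∀ᵐ x ∂μ, τ (σ x) = x)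
    (hwv : ∀ᵐ x ∂μ, w x * v (σ x) = 1) : Function.Surjective (h.toLp hp_top) := by
  intro g
  refine ⟨h'.toLp hp_top g, Lp.ext ?_⟩
  filter_upwards [h.coeFn_toLp hp_top _, h.weight_mul_comp_ae_eq (h'.coeFn_toLp hp_top g), hτσ,
    hwv] with x h1 h2 h3 h4
  rw [h1, h2, ← mul_assoc, h4, h3, one_mul]

end IsIsometricWeightedComp

lemma isIsometricWeightedComp_pwAffine {p : ℝ≥0∞} (hp : p ≠ 0) (hp_top : p ≠ ∞) {a b : ℝ}
    (ha : a ∈ Ioo (0 : ℝ) 1) (hb : b ∈ Ioo (0 : ℝ) 1) :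
    IsIsometricWeightedComp p (volume.restrict (Ioo (0 : ℝ) 1)) (volume.restrict (Ioo (0 : ℝ) 1))
      (pwAffine a b) fun x => pwAffineSlope a b x ^ p.toReal⁻¹ where
  measurable_comp := (strictMono_pwAffine ha hb).monotone.measurable
  measurable_weight :=
    (Measurable.ite measurableSet_Iio measurable_const measurable_const).pow_const _
  ae_weight_ne_zero := .of_forall fun x => (Real.rpow_pos_of_pos (pwAffineSlope_pos ha hb x) _).ne'
  map_withDensity := by
    have ht : 0 < p.toReal := ENNReal.toReal_pos hp hp_top
    have hW : (fun x => ‖pwAffineSlope a b x ^ p.toReal⁻¹‖ₑ ^ p.toReal) =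
        fun x => ENNReal.ofReal (pwAffineSlope a b x) := funext fun x => by
      rw [Real.enorm_eq_ofReal (Real.rpow_nonneg (pwAffineSlope_pos ha hb x).le _),
        ENNReal.ofReal_rpow_of_nonneg (Real.rpow_nonneg (pwAffineSlope_pos ha hb x).le _) ht.le,
        ← Real.rpow_mul (pwAffineSlope_pos ha hb x).le, inv_mul_cancel₀ ht.ne', Real.rpow_one]
    rw [hW, map_withDensity_pwAffineSlope ha hb]

section KaltonPeck

variable {α : Type*} [MeasurableSpace α] {μ : Measure α} {p : ℝ≥0∞} {f : Lp ℝ p μ} {v : ℝ}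

lemma kaltonPeckLp_ae_eq_smul (hf : ∀ᵐ x ∂μ, f x = 0 ∨ f x = v) :
    kaltonPeckLp f =ᵐ[μ] Real.log (|v| / ‖f‖) • ⇑f := by
  filter_upwards [hf] with x hx
  rcases hx with hx | hx <;> simp [kaltonPeckLp, hx, mul_comm]

lemma memLp_kaltonPeckLp_of_ae_eq_zero_or (hf : ∀ᵐ x ∂μ, f x = 0 ∨ f x = v) :
    MemLp (kaltonPeckLp f) p μ :=
  ((Lp.memLp f).const_smul _).ae_eq (kaltonPeckLp_ae_eq_smul hf).symm

lemma MemLp.toLp_kaltonPeckLp_of_ae_eq_zero_or [Fact (1 ≤ p)] (hK : MemLp (kaltonPeckLp f) p μ)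
    (hf : ∀ᵐ x ∂μ, f x = 0 ∨ f x = v) : hK.toLp _ = Real.log (|v| / ‖f‖) • f :=
  Lp.ext ((hK.coeFn_toLp).trans ((kaltonPeckLp_ae_eq_smul hf).trans (Lp.coeFn_smul _ _).symm))

end KaltonPeck

section UnitInterval

variable {p : ℝ≥0∞} [Fact (1 ≤ p)]

noncomputable def pwAffineLp (hp_top : p ≠ ∞) {a b : ℝ} (ha : a ∈ Ioo (0 : ℝ) 1)
    (hb : b ∈ Ioo (0 : ℝ) 1) :
    Lp ℝ p (volume.restrict (Ioo (0 : ℝ) 1)) ≃ₗᵢ[ℝ] Lp ℝ p (volume.restrict (Ioo (0 : ℝ) 1)) :=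
  have hp : p ≠ 0 := (zero_lt_one.trans_le Fact.out).ne'
  .ofSurjective ((isIsometricWeightedComp_pwAffine hp hp_top ha hb).toLp hp_top)
    ((isIsometricWeightedComp_pwAffine hp hp_top ha hb).surjective_toLp
      (isIsometricWeightedComp_pwAffine hp hp_top hb ha) hp_top
      (.of_forall (pwAffine_pwAffine ha hb))
      (.of_forall fun x => by
        rw [← Real.mul_rpow (pwAffineSlope_pos ha hb x).le (pwAffineSlope_pos hb ha _).le,
          pwAffineSlope_mul_pwAffineSlope ha hb, Real.one_rpow]))

variable (p) in
noncomputable def unitIndicatorIoo (c : ℝ) : Lp ℝ p (volume.restrict (Ioo (0 : ℝ) 1)) :=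
  indicatorConstLp p (measurableSet_Ioo : MeasurableSet (Ioo 0 c))
    ((Measure.restrict_apply_le _ _).trans_lt measure_Ioo_lt_top).ne (c ^ (-p.toReal⁻¹))

lemma norm_unitIndicatorIoo (hp_top : p ≠ ∞) {c : ℝ} (hc : c ∈ Ioo (0 : ℝ) 1) :
    ‖unitIndicatorIoo p c‖ = 1 := by
  have hp : p ≠ 0 := (zero_lt_one.trans_le Fact.out).ne'
  have ht : p.toReal⁻¹ ≠ 0 := inv_ne_zero (ENNReal.toReal_pos hp hp_top).ne'
  have hμ : (volume.restrict (Ioo (0 : ℝ) 1)).real (Ioo 0 c) = c := by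
    rw [measureReal_restrict_apply measurableSet_Ioo, Ioo_inter_Ioo, Real.volume_real_Ioo]
    simp [hc.1.le, hc.2.le]
  rw [unitIndicatorIoo, norm_indicatorConstLp hp hp_top, hμ,
    Real.norm_of_nonneg (Real.rpow_nonneg hc.1.le _), one_div, Real.rpow_neg hc.1.le, inv_mul_cancel₀ (Real.rpow_pos_of_pos hc.1 _).ne']

omit [Fact (1 ≤ p)] in
lemma coeFn_unitIndicatorIoo (c : ℝ) :
    unitIndicatorIoo p c =ᵐ[volume.restrict (Ioo (0 : ℝ) 1)]
      (Ioo 0 c).indicator fun _ => c ^ (-p.toReal⁻¹) :=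
  indicatorConstLp_coeFn

omit [Fact (1 ≤ p)] in
lemma unitIndicatorIoo_ae_eq_zero_or (c : ℝ) :
    ∀ᵐ x ∂(volume.restrict (Ioo (0 : ℝ) 1)),
      unitIndicatorIoo p c x = 0 ∨ unitIndicatorIoo p c x = c ^ (-p.toReal⁻¹) := by
  filter_upwards [coeFn_unitIndicatorIoo c] with x hx
  rw [hx]
  by_cases hxc : x ∈ Ioo 0 c <;> simp [hxc]

lemma pwAffineLp_unitIndicatorIoo (hp_top : p ≠ ∞) {a b : ℝ} (ha : a ∈ Ioo (0 : ℝ) 1)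
    (hb : b ∈ Ioo (0 : ℝ) 1) :
    pwAffineLp hp_top ha hb (unitIndicatorIoo p b) = unitIndicatorIoo p a := by
  have hp : p ≠ 0 := (zero_lt_one.trans_le Fact.out).ne'
  have h := isIsometricWeightedComp_pwAffine hp hp_top ha hb
  refine Lp.ext ?_
  filter_upwards [h.coeFn_toLp hp_top _, h.weight_mul_comp_ae_eq (coeFn_unitIndicatorIoo b),
    coeFn_unitIndicatorIoo a] with x h1 h2 h3
  rw [pwAffineLp, LinearIsometryEquiv.coe_ofSurjective, h1, h2, h3]
  by_cases hx : x ∈ Ioo 0 a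
  · rw [indicator_of_mem ((pwAffine_mem_Ioo_zero_iff ha hb).2 hx), indicator_of_mem hx,
      pwAffineSlope, if_pos hx.2, Real.div_rpow hb.1.le ha.1.le, Real.rpow_neg hb.1.le,
      Real.rpow_neg ha.1.le, div_mul_eq_mul_div, mul_inv_cancel₀ (Real.rpow_pos_of_pos hb.1 _).ne',
      one_div]
  · rw [indicator_of_notMem (mt (pwAffine_mem_Ioo_zero_iff ha hb).1 hx), indicator_of_notMem hx,
      mul_zero]

end UnitInterval

theorem exists_norm_kaltonPeck_commutator_eq {p : ℝ≥0∞} [Fact (1 ≤ p)] (hp_top : p ≠ ∞) {a b : ℝ}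
    (ha : a ∈ Ioo (0 : ℝ) 1) (hb : b ∈ Ioo (0 : ℝ) 1) :
    ∃ (T : Lp ℝ p (volume.restrict (Ioo (0 : ℝ) 1)) ≃ₗᵢ[ℝ] Lp ℝ p (volume.restrict (Ioo (0 : ℝ) 1)))
      (f : Lp ℝ p (volume.restrict (Ioo (0 : ℝ) 1))), ‖f‖ = 1 ∧
      ∃ (hf : MemLp (kaltonPeckLp f) p (volume.restrict (Ioo (0 : ℝ) 1)))
        (hTf : MemLp (kaltonPeckLp (T f)) p (volume.restrict (Ioo (0 : ℝ) 1))),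
        ‖hTf.toLp _ - T (hf.toLp _)‖ = |Real.log (b / a)| / p.toReal := by
  have hp : p ≠ 0 := (zero_lt_one.trans_le Fact.out).ne'
  set T := pwAffineLp hp_top ha hb
  have hTf : T (unitIndicatorIoo p b) = unitIndicatorIoo p a :=
    pwAffineLp_unitIndicatorIoo hp_top ha hb
  have hf₀ := unitIndicatorIoo_ae_eq_zero_or (p := p) b
  have hTf₀ : ∀ᵐ x ∂(volume.restrict (Ioo (0 : ℝ) 1)),
      T (unitIndicatorIoo p b) x = 0 ∨ T (unitIndicatorIoo p b) x = a ^ (-p.toReal⁻¹) :=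
    hTf ▸ unitIndicatorIoo_ae_eq_zero_or a
  refine ⟨T, unitIndicatorIoo p b, norm_unitIndicatorIoo hp_top hb,
    memLp_kaltonPeckLp_of_ae_eq_zero_or hf₀, memLp_kaltonPeckLp_of_ae_eq_zero_or hTf₀, ?_⟩
  rw [MemLp.toLp_kaltonPeckLp_of_ae_eq_zero_or _ hf₀,
    MemLp.toLp_kaltonPeckLp_of_ae_eq_zero_or _ hTf₀, map_smul, ← sub_smul, norm_smul,
    T.norm_map, norm_unitIndicatorIoo hp_top hb, mul_one, div_one, div_one,
    abs_of_pos (Real.rpow_pos_of_pos ha.1 _), abs_of_pos (Real.rpow_pos_of_pos hb.1 _),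
    Real.log_rpow ha.1, Real.log_rpow hb.1, Real.norm_eq_abs,
    show -p.toReal⁻¹ * Real.log a - -p.toReal⁻¹ * Real.log b = Real.log (b / a) * p.toReal⁻¹ by
      rw [Real.log_div hb.1.ne' ha.1.ne']; ring,
    abs_mul, abs_of_pos (inv_pos.2 (ENNReal.toReal_pos hp hp_top)), div_eq_mul_inv _ p.toReal]

theorem stmt_11_general (p : ℝ) [Fact ((1 : ENNReal) ≤ ENNReal.ofReal p)]
    (C : ℝ) (hC : 0 < C) :
    ∃ (T : Lp ℝ (ENNReal.ofReal p) (MeasureTheory.volume.restrict (Set.Ioo (0:ℝ) 1))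
          ≃ₗᵢ[ℝ] Lp ℝ (ENNReal.ofReal p) (MeasureTheory.volume.restrict (Set.Ioo (0:ℝ) 1)))
      (f : Lp ℝ (ENNReal.ofReal p) (MeasureTheory.volume.restrict (Set.Ioo (0:ℝ) 1))),
      ‖f‖ = 1 ∧
      ∃ (hf : MemLp (kaltonPeckLp f) (ENNReal.ofReal p)
              (MeasureTheory.volume.restrict (Set.Ioo (0:ℝ) 1)))
        (hTf : MemLp (kaltonPeckLp (T f)) (ENNReal.ofReal p)
              (MeasureTheory.volume.restrict (Set.Ioo (0:ℝ) 1))),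
        C < ‖hTf.toLp _ - T (hf.toLp _)‖ := by
  have hp : 1 ≤ p := ENNReal.one_le_ofReal.1 Fact.out
  have hexp : Real.exp (-(p * C + 1)) < 1 := Real.exp_lt_one_iff.2 (by nlinarith)
  have ha : Real.exp (-(p * C + 1)) / 2 ∈ Ioo (0 : ℝ) 1 := ⟨by positivity, by linarith⟩
  obtain ⟨T, f, hf, hK, hKT, hnorm⟩ :=
    exists_norm_kaltonPeck_commutator_eq (p := ENNReal.ofReal p) ENNReal.ofReal_ne_top ha
      (by norm_num : (1 / 2 : ℝ) ∈ Ioo 0 1)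
  refine ⟨T, f, hf, hK, hKT, ?_⟩
  have hba : (1 / 2) / (Real.exp (-(p * C + 1)) / 2) = Real.exp (p * C + 1) := by
    rw [Real.exp_neg]; field_simp
  rw [hnorm, hba, Real.log_exp, ENNReal.toReal_ofReal (by linarith),
    abs_of_pos (by nlinarith), lt_div_iff₀ (by linarith)]
  linarith

/-- for `1 ≤ p < ∞`, the Kalton–Peck map on `L_p(0,1)` is not a
centralizer for the group of surjective linear isometries of `L_p(0,1)`: for every
`C > 0` there are a surjective linear isometry `T` and a norm-one `f` with
`K f, K(T f) ∈ L_p` and `‖K(T f) − T(K f)‖_p > C`.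
(The instance `Fact (1 ≤ ENNReal.ofReal p)` is a restatement of `hp : 1 ≤ p`.) -/
theorem stmt_11 (p : ℝ) (hp : 1 ≤ p) [Fact ((1 : ENNReal) ≤ ENNReal.ofReal p)]
    (C : ℝ) (hC : 0 < C) :
    ∃ (T : Lp ℝ (ENNReal.ofReal p) (MeasureTheory.volume.restrict (Set.Ioo (0:ℝ) 1))
          ≃ₗᵢ[ℝ] Lp ℝ (ENNReal.ofReal p) (MeasureTheory.volume.restrict (Set.Ioo (0:ℝ) 1)))
      (f : Lp ℝ (ENNReal.ofReal p) (MeasureTheory.volume.restrict (Set.Ioo (0:ℝ) 1))),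
      ‖f‖ = 1 ∧
      ∃ (hf : MemLp (kaltonPeckLp f) (ENNReal.ofReal p)
              (MeasureTheory.volume.restrict (Set.Ioo (0:ℝ) 1)))
        (hTf : MemLp (kaltonPeckLp (T f)) (ENNReal.ofReal p)
              (MeasureTheory.volume.restrict (Set.Ioo (0:ℝ) 1))),
        C < ‖hTf.toLp _ - T (hf.toLp _)‖ :=
  stmt_11_general p C hC
end

section
/- The natural action of the unitary group of the complex Hilbert space ℓ₂ is not compatible with the Kalton–Peck map: there do not exist a constant C ≥ 0 and an assignment, to each unitary operator u of ℓ₂, of a linear map d_u : c₀₀ → ℂ^ℕ such that for every unitary u and every finitely supported vector x with ‖x‖₂ = 1, the sequence u(K x) − K(u x) + d_u(x) belongs to ℓ₂ and has ℓ₂-norm at most C. (Here K x is the pointwise-defined Kalton–Peck sequence, finitely supported whenever x is, and K(u x) ∈ ℂ^ℕ is defined pointwise.) -/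
/-- The Kalton–Peck map on `ℓ₂(ℕ,ℂ)`, defined pointwise:
`(K x)ₙ = xₙ · log(|xₙ| / ‖x‖₂)` (with the convention `Real.log 0 = 0`,
so `0·log 0 = 0` and `K 0 = 0`). -/
noncomputable def kaltonPeckSeq (x : lp (fun _ : ℕ => ℂ) 2) : ℕ → ℂ :=
  fun n => x n * (Real.log (‖x n‖ / ‖x‖) : ℂ)

/-!
Fix `L` and a block of `2 ^ L` standard basis vectors `e_t`. The normalized Walsh matrix
`A = 2^(-L/2) W` is Hermitian and unitary, so (minus) a reflection `u` of `ℓ₂` swaps each `e_k`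
with the flat unit vector `w_k = ∑ₜ A k t • e_t`. The Kalton–Peck map vanishes on `e_k` and acts
on `w_k` as multiplication by `λ = log 2^(-L/2)`. Testing compatibility at `x = e_t` gives
`d_u(e_t) = q_t + λ w_t` with `‖q_t‖ ≤ C`; testing it at `x = w_k` and using linearity of `d_u`
gives `‖2λ e_k + ∑ₜ A k t • q_t‖ ≤ C`. As `A` is unitary, `∑ₖ ‖∑ₜ A k t • q_t‖² = ∑ₜ ‖q_t‖²`,
so some `k` has `‖∑ₜ A k t • q_t‖ ≤ C`, whence `L log 2 = 2|λ| ≤ 2C` for every `L`.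
-/

open Matrix
open scoped InnerProductSpace ComplexConjugate lp

section UnitaryCombination

variable {𝕜 E ι : Type*} [RCLike 𝕜] [NormedAddCommGroup E] [InnerProductSpace 𝕜 E]
  [Fintype ι] [DecidableEq ι]

theorem sum_norm_sq_sum_smul_of_mem_unitaryGroup {A : Matrix ι ι 𝕜}
    (hA : A ∈ unitaryGroup ι 𝕜) (v : ι → E) :
    ∑ s, ‖∑ t, A s t • v t‖ ^ 2 = ∑ t, ‖v t‖ ^ 2 := by
  have hAA : ∀ t t', ∑ s, star (A s t) * A s t' = if t = t' then 1 else 0 := fun t t' => by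
    simpa [mul_apply, one_apply] using congrFun₂ (mem_unitaryGroup_iff'.mp hA) t t'
  have hinner : ∑ s, ⟪∑ t, A s t • v t, ∑ t', A s t' • v t'⟫_𝕜 = ∑ t, ⟪v t, v t⟫_𝕜 := by
    calc ∑ s, ⟪∑ t, A s t • v t, ∑ t', A s t' • v t'⟫_𝕜
        = ∑ t, ∑ t', (∑ s, star (A s t) * A s t') * ⟪v t, v t'⟫_𝕜 := by
          simp_rw [sum_inner, inner_smul_left, inner_sum, inner_smul_right, Finset.mul_sum,
            Finset.sum_mul, RCLike.star_def, mul_assoc]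
          rw [Finset.sum_comm]
          exact Finset.sum_congr rfl fun t _ => Finset.sum_comm
      _ = ∑ t, ⟪v t, v t⟫_𝕜 := by
          simp only [hAA, ite_mul, one_mul, zero_mul, Finset.sum_ite_eq, Finset.mem_univ, if_true]
  apply_fun RCLike.re at hinner
  simpa only [map_sum, inner_self_eq_norm_sq] using hinner

theorem exists_norm_sum_smul_le_of_mem_unitaryGroup [Nonempty ι] {A : Matrix ι ι 𝕜}
    (hA : A ∈ unitaryGroup ι 𝕜) {v : ι → E} {C : ℝ} (hv : ∀ t, ‖v t‖ ≤ C) :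
    ∃ s, ‖∑ t, A s t • v t‖ ≤ C := by
  have hC : 0 ≤ C := (norm_nonneg _).trans (hv (Classical.arbitrary ι))
  have hsum : ∑ s, ‖∑ t, A s t • v t‖ ^ 2 ≤ ∑ _s : ι, C ^ 2 := by
    rw [sum_norm_sq_sum_smul_of_mem_unitaryGroup hA]
    exact Finset.sum_le_sum fun t _ => pow_le_pow_left₀ (norm_nonneg _) (hv t) 2
  obtain ⟨s, -, hs⟩ := Finset.exists_le_of_sum_le Finset.univ_nonempty hsum
  exact ⟨s, (pow_le_pow_iff_left₀ (norm_nonneg _) hC two_ne_zero).mp hs⟩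

end UnitaryCombination

section Swap

variable {𝕜 E ι : Type*} [RCLike 𝕜] [NormedAddCommGroup E] [InnerProductSpace 𝕜 E] [Fintype ι]

theorem exists_linearIsometryEquiv_swap_of_inner {f g : ι → E}
    (hff : ∀ i j, ⟪f i, f j⟫_𝕜 = ⟪g i, g j⟫_𝕜) (hfg : ∀ i j, ⟪f i, g j⟫_𝕜 = ⟪g i, f j⟫_𝕜) :
    ∃ u : E ≃ₗᵢ[𝕜] E, ∀ i, u (f i) = g i ∧ u (g i) = f i := by
  -- `f i - g i ∈ K` and `f i + g i ∈ Kᗮ`, so `-K.reflection` exchanges `f i` and `g i`.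
  set K := Submodule.span 𝕜 (Set.range (f - g))
  have : FiniteDimensional 𝕜 K := FiniteDimensional.span_of_finite 𝕜 (Set.finite_range _)
  have hK : ∀ i, K.reflection (f i - g i) = f i - g i := fun i =>
    K.reflection_mem_subspace_eq_self (Submodule.subset_span ⟨i, rfl⟩)
  have hKperp : ∀ i, K.reflection (f i + g i) = -(f i + g i) := by
    intro i
    refine K.reflection_mem_subspace_orthogonalComplement_eq_neg ?_
    have hortho : (𝕜 ∙ (f i + g i)) ⟂ K := Submodule.isOrtho_span.mpr <| by
      rintro _ rfl _ ⟨j, rfl⟩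
      simp only [Pi.sub_apply, inner_add_left, inner_sub_right, hff, hfg]
      ring
    exact hortho (Submodule.mem_span_singleton_self _)
  refine ⟨K.reflection.trans (LinearIsometryEquiv.neg 𝕜), fun i => ⟨?_, ?_⟩⟩
  all_goals
    have h₁ := hK i
    have h₂ := hKperp i
    rw [map_sub] at h₁
    rw [map_add] at h₂
    simp only [LinearIsometryEquiv.trans_apply, LinearIsometryEquiv.coe_neg]
  · linear_combination (norm := module) (-2⁻¹ : 𝕜) • (h₁ + h₂)
  · linear_combination (norm := module) (2⁻¹ : 𝕜) • (h₁ - h₂)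

theorem Orthonormal.exists_linearIsometryEquiv_swap [DecidableEq ι] {f : ι → E}
    (hf : Orthonormal 𝕜 f) {A : Matrix ι ι 𝕜} (hA : A ∈ unitaryGroup ι 𝕜)
    (hAh : A.IsHermitian) :
    ∃ u : E ≃ₗᵢ[𝕜] E, ∀ k, u (f k) = ∑ t, A k t • f t ∧ u (∑ t, A k t • f t) = f k := by
  have hAA : ∀ i j, ∑ t, conj (A i t) * A j t = if i = j then 1 else 0 := fun i j => by
    simpa [mul_apply, one_apply, mul_comm, eq_comm] using
      congrFun₂ (mem_unitaryGroup_iff.mp hA) j i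
  refine exists_linearIsometryEquiv_swap_of_inner (fun i j => ?_) (fun i j => ?_)
  · rw [hf.inner_sum, orthonormal_iff_ite.mp hf, hAA]
  · rw [hf.inner_right_fintype, hf.inner_left_fintype, ← hAh.apply, RCLike.star_def]

end Swap

section Walsh

variable (R : Type*) [CommRing R] (L : ℕ)

def walshMatrix : Matrix (Fin L → Bool) (Fin L → Bool) R :=
  fun s t => ∏ j, if s j && t j then -1 else 1

variable {R L}

theorem walshMatrix_conjTranspose [StarRing R] : (walshMatrix R L)ᴴ = walshMatrix R L := by
  ext s t
  simp only [conjTranspose_apply, walshMatrix, star_prod, apply_ite star, star_neg, star_one,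
    Bool.and_comm]

theorem walshMatrix_mul_self : walshMatrix R L * walshMatrix R L = (2 ^ L : R) • 1 := by
  ext s s'
  have hfactor : ∀ j, (∑ b : Bool, (if s j && b then (-1 : R) else 1) *
      (if b && s' j then -1 else 1)) = if s j = s' j then 2 else 0 := by
    intro j
    cases s j <;> cases s' j <;> norm_num
  simp only [mul_apply, walshMatrix, ← Finset.prod_mul_distrib]
  rw [← Fintype.prod_sum (fun j b => (if s j && b then (-1 : R) else 1) *
      (if b && s' j then -1 else 1))]
  simp only [hfactor, Fintype.prod_ite_zero, ← funext_iff]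
  simp [one_apply]

theorem norm_walshMatrix_apply {R : Type*} [NormedField R] (s t : Fin L → Bool) :
    ‖walshMatrix R L s t‖ = 1 := by
  simp only [walshMatrix, norm_prod, apply_ite norm, norm_neg, norm_one, ite_self,
    Finset.prod_const_one]

end Walsh

section WalshUnitary

variable (L : ℕ)

noncomputable def walshUnitary : Matrix (Fin L → Bool) (Fin L → Bool) ℂ :=
  (((√(2 ^ L))⁻¹ : ℝ) : ℂ) • walshMatrix ℂ L

theorem walshUnitary_isHermitian : (walshUnitary L).IsHermitian := by
  rw [IsHermitian, walshUnitary, conjTranspose_smul, walshMatrix_conjTranspose,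
    RCLike.star_def, Complex.conj_ofReal]

theorem walshUnitary_mem_unitaryGroup : walshUnitary L ∈ unitaryGroup (Fin L → Bool) ℂ := by
  have hc : ((√(2 ^ L))⁻¹ : ℝ) * (√(2 ^ L))⁻¹ * 2 ^ L = 1 := by
    rw [← mul_inv, Real.mul_self_sqrt (by positivity), inv_mul_cancel₀ (by positivity)]
  have hc' : ((((√(2 ^ L))⁻¹ : ℝ) : ℂ) * (((√(2 ^ L))⁻¹ : ℝ) : ℂ)) * 2 ^ L = 1 := by
    exact_mod_cast hc
  rw [mem_unitaryGroup_iff, star_eq_conjTranspose, (walshUnitary_isHermitian L).eq, walshUnitary,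
    smul_mul_smul_comm, walshMatrix_mul_self, smul_smul, hc', one_smul]

theorem norm_walshUnitary_apply (s t : Fin L → Bool) : ‖walshUnitary L s t‖ = (√(2 ^ L))⁻¹ := by
  rw [walshUnitary, Matrix.smul_apply, smul_eq_mul, norm_mul, norm_walshMatrix_apply, mul_one,
    Complex.norm_real, Real.norm_of_nonneg (by positivity)]

theorem log_inv_sqrt_two_pow : Real.log (√(2 ^ L))⁻¹ = -(L * Real.log 2 / 2) := by
  rw [Real.log_inv, Real.log_sqrt (by positivity), Real.log_pow]

end WalshUnitary

theorem kaltonPeckSeq_eq_smul_of_norm_apply {x : ℓ²(ℕ, ℂ)} {r : ℝ}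
    (h : ∀ n, x n ≠ 0 → ‖x n‖ = r) :
    kaltonPeckSeq x = (Real.log (r / ‖x‖) : ℂ) • ⇑x := by
  funext n
  by_cases hn : x n = 0
  · simp [kaltonPeckSeq, hn]
  · simp [kaltonPeckSeq, h n hn, mul_comm]

theorem kaltonPeckSeq_single (i : ℕ) : kaltonPeckSeq (lp.single 2 i 1 : ℓ²(ℕ, ℂ)) = 0 := by
  have h (n : ℕ) (hn : (lp.single 2 i 1 : ℓ²(ℕ, ℂ)) n ≠ 0) :
      ‖(lp.single 2 i 1 : ℓ²(ℕ, ℂ)) n‖ = 1 := by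
    by_cases hi : n = i <;> simp_all
  simp [kaltonPeckSeq_eq_smul_of_norm_apply h, lp.norm_single]

section Block

variable {ι : Type*}

theorem orthonormal_lpSingle_comp {e : ι → ℕ} (he : Function.Injective e) :
    Orthonormal ℂ fun t => (lp.single 2 (e t) 1 : ℓ²(ℕ, ℂ)) := by
  classical
  rw [orthonormal_iff_ite]
  intro s t
  simp [lp.inner_single_left, Pi.single_apply, he.eq_iff]

variable [Fintype ι]

theorem coe_sum_smul_lpSingle (e : ι → ℕ) (a : ι → ℂ) :
    ⇑(∑ t, a t • (lp.single 2 (e t) 1 : ℓ²(ℕ, ℂ))) =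
      ⇑(∑ t, a t • Finsupp.single (e t) (1 : ℂ)) := by
  simp only [lp.coeFn_sum, lp.coeFn_smul, lp.coeFn_single, Finsupp.coe_finsetSum,
    Finsupp.coe_smul, Finsupp.single_eq_pi_single]

theorem finite_support_sum_smul_lpSingle (e : ι → ℕ) (a : ι → ℂ) :
    (Function.support ⇑(∑ t, a t • (lp.single 2 (e t) 1 : ℓ²(ℕ, ℂ)))).Finite := by
  rw [coe_sum_smul_lpSingle]
  exact Finsupp.hasFiniteSupport _

theorem norm_sum_smul_lpSingle_apply {e : ι → ℕ} (he : Function.Injective e) {a : ι → ℂ} {r : ℝ}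
    (ha : ∀ t, ‖a t‖ = r) (n : ℕ) (hn : (∑ t, a t • (lp.single 2 (e t) 1 : ℓ²(ℕ, ℂ))) n ≠ 0) :
    ‖(∑ t, a t • (lp.single 2 (e t) 1 : ℓ²(ℕ, ℂ))) n‖ = r := by
  classical
  simp only [lp.coeFn_sum, Finset.sum_apply, lp.coeFn_smul, Pi.smul_apply, lp.coeFn_single,
    Pi.single_apply, smul_eq_mul, mul_ite, mul_one, mul_zero] at hn ⊢
  obtain ⟨s, rfl⟩ : ∃ s, e s = n := by
    by_contra! h
    simp [fun t => (h t).symm] at hn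
  simp [he.eq_iff, ha]

end Block

def KaltonPeckCompatible (u : ℓ²(ℕ, ℂ) ≃ₗᵢ[ℂ] ℓ²(ℕ, ℂ)) (D : (ℕ →₀ ℂ) →ₗ[ℂ] (ℕ → ℂ)) (C : ℝ) :
    Prop :=
  ∀ (x kx : ℓ²(ℕ, ℂ)) (xf : ℕ →₀ ℂ), (Function.support (x : ℕ → ℂ)).Finite → ‖x‖ = 1 →
    (∀ n, xf n = x n) → (∀ n, kx n = kaltonPeckSeq x n) →
    ∃ q : ℓ²(ℕ, ℂ), (∀ n, q n = u kx n - kaltonPeckSeq (u x) n + D xf n) ∧ ‖q‖ ≤ C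

theorem KaltonPeckCompatible.abs_log_le {ι : Type*} [Fintype ι] [DecidableEq ι] [Nonempty ι]
    {e : ι → ℕ} (he : Function.Injective e) {A : Matrix ι ι ℂ} (hA : A ∈ unitaryGroup ι ℂ)
    {c : ℝ} (hAc : ∀ k t, ‖A k t‖ = c) {u : ℓ²(ℕ, ℂ) ≃ₗᵢ[ℂ] ℓ²(ℕ, ℂ)}
    (hu : ∀ k, u (lp.single 2 (e k) 1) = ∑ t, A k t • (lp.single 2 (e t) 1 : ℓ²(ℕ, ℂ)) ∧
      u (∑ t, A k t • lp.single 2 (e t) 1) = lp.single 2 (e k) 1)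
    {D : (ℕ →₀ ℂ) →ₗ[ℂ] (ℕ → ℂ)} {C : ℝ} (h : KaltonPeckCompatible u D C) :
    |Real.log c| ≤ C := by
  set f : ι → ℓ²(ℕ, ℂ) := fun t => lp.single 2 (e t) 1
  set g : ι → ℓ²(ℕ, ℂ) := fun k => ∑ t, A k t • f t
  replace hu : ∀ k, u (f k) = g k ∧ u (g k) = f k := hu
  have hf_norm : ∀ t, ‖f t‖ = 1 := fun t => by simp [f, lp.norm_single]
  have hg_norm : ∀ k, ‖g k‖ = 1 := fun k => by
    rw [← (hu k).1, LinearIsometryEquiv.norm_map, hf_norm]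
  have hKg : ∀ k, kaltonPeckSeq (g k) = (Real.log c : ℂ) • ⇑(g k) := fun k => by
    rw [kaltonPeckSeq_eq_smul_of_norm_apply (norm_sum_smul_lpSingle_apply he (hAc k)), hg_norm,
      div_one]
  have hgf : ∀ k, ∑ t, A k t • g t = f k := fun k => by
    simp only [← (hu _).1, ← map_smul, ← map_sum]
    exact (hu k).2
  choose q hq hqC using fun t => h (f t) 0 (Finsupp.single (e t) 1)
    ((Set.finite_singleton (e t)).subset (Pi.support_single_subset))
    (hf_norm t) (fun n => by simp [f, Finsupp.single_eq_pi_single])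
    (fun n => by simp [f, kaltonPeckSeq_single])
  have hDf : ∀ t, D (Finsupp.single (e t) 1) = ⇑(q t + (Real.log c : ℂ) • g t) := by
    intro t
    funext n
    have := hq t n
    rw [map_zero, lp.coeFn_zero, Pi.zero_apply, (hu t).1, hKg] at this
    simp only [lp.coeFn_add, lp.coeFn_smul, Pi.add_apply, Pi.smul_apply, smul_eq_mul] at this ⊢
    linear_combination -this
  choose Q hQ hQC using fun k => h (g k) ((Real.log c : ℂ) • g k)
    (∑ t, A k t • Finsupp.single (e t) 1) (finite_support_sum_smul_lpSingle e (A k))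
    (hg_norm k) (congrFun (coe_sum_smul_lpSingle e (A k)).symm) (fun n => by rw [hKg]; rfl)
  have hQ_eq : ∀ k, Q k = (2 * Real.log c : ℂ) • f k + ∑ t, A k t • q t := by
    intro k
    have hD : D (∑ t, A k t • Finsupp.single (e t) 1)
        = ⇑(∑ t, A k t • q t + (Real.log c : ℂ) • f k) := by
      rw [← hgf k, Finset.smul_sum, ← Finset.sum_add_distrib, map_sum]
      simp only [map_smul, hDf, lp.coeFn_sum, lp.coeFn_smul, lp.coeFn_add]
      refine Finset.sum_congr rfl fun t _ => ?_
      module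
    apply lp.ext
    funext n
    rw [hQ k n, map_smul, (hu k).2, kaltonPeckSeq_single, hD]
    simp only [lp.coeFn_add, lp.coeFn_smul, Pi.add_apply, Pi.smul_apply, Pi.zero_apply,
      smul_eq_mul]
    ring
  obtain ⟨k, hk⟩ := exists_norm_sum_smul_le_of_mem_unitaryGroup hA hqC
  have hbound : ‖(2 * Real.log c : ℂ) • f k‖ ≤ C + C := calc
    _ = ‖Q k - ∑ t, A k t • q t‖ := by rw [hQ_eq, add_sub_cancel_right]
    _ ≤ ‖Q k‖ + ‖∑ t, A k t • q t‖ := norm_sub_le _ _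
    _ ≤ C + C := add_le_add (hQC k) hk
  rw [norm_smul, hf_norm, mul_one, norm_mul, Complex.norm_real, Complex.norm_two,
    Real.norm_eq_abs] at hbound
  linarith

/-- the natural action of the unitary group of `ℓ₂` is not compatible
with the Kalton–Peck map: there are no constant `C ≥ 0` and assignment of linear maps
`d_u : c₀₀ → ℂ^ℕ` such that `u(K x) − K(u x) + d_u(x)` is always in `ℓ₂` with norm
at most `C`, for all unitaries `u` and all norm-one finitely supported `x`. -/
theorem stmt_13 :
    ¬ ∃ (C : ℝ)
        (d : (lp (fun _ : ℕ => ℂ) 2 ≃ₗᵢ[ℂ] lp (fun _ : ℕ => ℂ) 2) →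
          ((ℕ →₀ ℂ) →ₗ[ℂ] (ℕ → ℂ))),
      0 ≤ C ∧
      ∀ (u : lp (fun _ : ℕ => ℂ) 2 ≃ₗᵢ[ℂ] lp (fun _ : ℕ => ℂ) 2)
        (x kx : lp (fun _ : ℕ => ℂ) 2) (xf : ℕ →₀ ℂ),
        (Function.support (x : ℕ → ℂ)).Finite → ‖x‖ = 1 →
        (∀ n, xf n = x n) →
        (∀ n, kx n = kaltonPeckSeq x n) →
        ∃ q : lp (fun _ : ℕ => ℂ) 2,
          (∀ n, q n = u kx n - kaltonPeckSeq (u x) n + d u xf n) ∧ ‖q‖ ≤ C := by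
  rintro ⟨C, d, -, h⟩
  obtain ⟨L, hL⟩ := exists_nat_gt (2 * C / Real.log 2)
  obtain ⟨e, he⟩ : ∃ e : (Fin L → Bool) → ℕ, Function.Injective e :=
    ⟨_, Fin.val_injective.comp (Fintype.equivFin _).injective⟩
  obtain ⟨u, hu⟩ := (orthonormal_lpSingle_comp he).exists_linearIsometryEquiv_swap
    (walshUnitary_mem_unitaryGroup L) (walshUnitary_isHermitian L)
  have hlog := KaltonPeckCompatible.abs_log_le he (walshUnitary_mem_unitaryGroup L)
    (norm_walshUnitary_apply L) hu (h u)
  rw [log_inv_sqrt_two_pow, abs_neg, abs_of_nonneg (by positivity)] at hlog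
  rw [div_lt_iff₀ (Real.log_pos one_lt_two)] at hL
  linarith
end

section
/- Let H and H' be real (or complex) Hilbert spaces, let C ≥ 0, and let B : H → H' be any map satisfying ‖B x‖ ≤ C‖x‖ for all x ∈ H. Then for every orthonormal family x₁,…,xₙ in H, the average over all 2ⁿ choices of signs satisfies: 2^{-n} ∑_{ε∈{−1,1}ⁿ} ‖B(ε₁x₁ + ⋯ + εₙxₙ) − (ε₁ B(x₁) + ⋯ + εₙ B(xₙ))‖ ≤ 2C√n. -/
/-!
Write `S ε = ∑ εᵢ xᵢ`. Orthonormality gives `‖S ε‖ = √n` for every sign vector, so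
`‖B (S ε)‖ ≤ C √n`. The vectors `∑ εᵢ B xᵢ` need not be small individually, but distinct
coordinates `εᵢ, εⱼ` are orthogonal under averaging, so the average of `‖∑ εᵢ B xᵢ‖²` is
`∑ ‖B xᵢ‖² ≤ n C²`; by Cauchy–Schwarz the average of `‖∑ εᵢ B xᵢ‖` is at most `C √n`.
The triangle inequality adds the two bounds.
-/

open Finset

section Signs

variable (R : Type*) [Ring R]

def boolSign (b : Bool) : R := if b then 1 else -1

variable {R}

@[simp]
theorem boolSign_mul_self (b : Bool) : boolSign R b * boolSign R b = 1 := by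
  cases b <;> simp [boolSign]

@[simp]
theorem boolSign_not (b : Bool) : boolSign R (!b) = -boolSign R b := by
  cases b <;> simp [boolSign]

@[simp]
theorem star_boolSign [StarRing R] (b : Bool) : star (boolSign R b) = boolSign R b := by
  cases b <;> simp [boolSign]

@[simp]
theorem norm_boolSign {𝕜 : Type*} [RCLike 𝕜] (b : Bool) : ‖boolSign 𝕜 b‖ = 1 := by
  cases b <;> simp [boolSign]

variable {ι : Type*} [Fintype ι] [DecidableEq ι]

theorem sum_boolSign_mul_boolSign (i j : ι) :
    ∑ ε : ι → Bool, boolSign R (ε i) * boolSign R (ε j) =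
      if i = j then 2 ^ Fintype.card ι else 0 := by
  split_ifs with hij
  · subst hij
    simp
  · -- flipping the `i`-th sign pairs off the terms with opposite values
    refine sum_ninvolution (fun ε => Function.update ε i !(ε i)) (fun ε => ?_) (fun ε _ => ?_)
      (fun _ => mem_univ _) (fun ε => ?_)
    · simp [Function.update_of_ne (Ne.symm hij)]
    · exact fun h => by simpa using congr_fun h i
    · simp

end Signs

section SignedSums

variable {𝕜 E ι : Type*} [RCLike 𝕜] [NormedAddCommGroup E] [InnerProductSpace 𝕜 E] [Fintype ι]

theorem Orthonormal.norm_sum_smul_sq {x : ι → E} (hx : Orthonormal 𝕜 x) (c : ι → 𝕜) :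
    ‖∑ i, c i • x i‖ ^ 2 = ∑ i, ‖c i‖ ^ 2 := by
  apply RCLike.ofReal_injective (K := 𝕜)
  push_cast
  rw [← inner_self_eq_norm_sq_to_K, hx.inner_sum]
  simp only [RCLike.conj_mul]

theorem Orthonormal.norm_sum_boolSign_smul {x : ι → E} (hx : Orthonormal 𝕜 x) (ε : ι → Bool) :
    ‖∑ i, boolSign 𝕜 (ε i) • x i‖ = √(Fintype.card ι) := by
  rw [← Real.sqrt_sq (norm_nonneg _), hx.norm_sum_smul_sq]
  simp

variable [DecidableEq ι]

theorem sum_norm_sum_boolSign_smul_sq (y : ι → E) :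
    ∑ ε : ι → Bool, ‖∑ i, boolSign 𝕜 (ε i) • y i‖ ^ 2 = 2 ^ Fintype.card ι * ∑ i, ‖y i‖ ^ 2 := by
  apply RCLike.ofReal_injective (K := 𝕜)
  push_cast
  calc ∑ ε : ι → Bool, (‖∑ i, boolSign 𝕜 (ε i) • y i‖ : 𝕜) ^ 2
      = ∑ ε : ι → Bool, ∑ i, ∑ j, boolSign 𝕜 (ε i) * boolSign 𝕜 (ε j) * inner 𝕜 (y i) (y j) := by
        refine sum_congr rfl fun ε _ => ?_
        rw [← inner_self_eq_norm_sq_to_K, sum_inner]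
        refine sum_congr rfl fun i _ => ?_
        rw [inner_sum]
        refine sum_congr rfl fun j _ => ?_
        rw [inner_smul_left, inner_smul_right, starRingEnd_apply, star_boolSign, mul_assoc]
    _ = ∑ i, ∑ j, (∑ ε : ι → Bool, boolSign 𝕜 (ε i) * boolSign 𝕜 (ε j)) * inner 𝕜 (y i) (y j) := by
        simp only [sum_mul]
        rw [sum_comm]
        exact sum_congr rfl fun i _ => sum_comm
    _ = 2 ^ Fintype.card ι * ∑ i, (‖y i‖ : 𝕜) ^ 2 := by
        simp [sum_boolSign_mul_boolSign, mul_sum, inner_self_eq_norm_sq_to_K]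

theorem sum_norm_sum_boolSign_smul_le (y : ι → E) :
    ∑ ε : ι → Bool, ‖∑ i, boolSign 𝕜 (ε i) • y i‖ ≤
      2 ^ Fintype.card ι * √(∑ i, ‖y i‖ ^ 2) := by
  have hcs := sq_sum_le_card_mul_sum_sq (s := univ)
    (f := fun ε : ι → Bool => ‖∑ i, boolSign 𝕜 (ε i) • y i‖)
  rw [sum_norm_sum_boolSign_smul_sq, card_univ, Fintype.card_fun, Fintype.card_bool,
    ← mul_assoc] at hcs
  calc _ ≤ √((2 ^ Fintype.card ι) ^ 2 * ∑ i, ‖y i‖ ^ 2) :=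
        Real.le_sqrt_of_sq_le (by simpa [sq] using hcs)
    _ = 2 ^ Fintype.card ι * √(∑ i, ‖y i‖ ^ 2) := by
        rw [Real.sqrt_mul (by positivity), Real.sqrt_sq (by positivity)]

end SignedSums

theorem stmt_15_general {𝕜 H H' : Type*} [RCLike 𝕜]
    [NormedAddCommGroup H] [InnerProductSpace 𝕜 H]
    [NormedAddCommGroup H'] [InnerProductSpace 𝕜 H']
    (C : ℝ) (hC : 0 ≤ C) (B : H → H') (hB : ∀ x : H, ‖B x‖ ≤ C * ‖x‖)
    (n : ℕ) (x : Fin n → H) (hx : Orthonormal 𝕜 x) :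
    (2 ^ n : ℝ)⁻¹ * ∑ ε : Fin n → Bool,
        ‖B (∑ i, (if ε i then (1 : 𝕜) else -1) • x i)
          - ∑ i, (if ε i then (1 : 𝕜) else -1) • B (x i)‖
      ≤ 2 * C * Real.sqrt n := by
  have hBx (ε : Fin n → Bool) : ‖B (∑ i, boolSign 𝕜 (ε i) • x i)‖ ≤ C * √n := by
    simpa [hx.norm_sum_boolSign_smul] using hB (∑ i, boolSign 𝕜 (ε i) • x i)
  have hBy : √(∑ i, ‖B (x i)‖ ^ 2) ≤ C * √n := by
    refine Real.sqrt_le_iff.2 ⟨by positivity, ?_⟩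
    calc ∑ i, ‖B (x i)‖ ^ 2 ≤ ∑ _i : Fin n, C ^ 2 := sum_le_sum fun i _ => by
          gcongr; simpa [hx.norm_eq_one] using hB (x i)
      _ = (C * √n) ^ 2 := by simp [mul_pow, mul_comm]
  rw [inv_mul_le_iff₀ (by positivity)]
  calc ∑ ε : Fin n → Bool,
        ‖B (∑ i, boolSign 𝕜 (ε i) • x i) - ∑ i, boolSign 𝕜 (ε i) • B (x i)‖
      ≤ ∑ ε : Fin n → Bool, (C * √n + ‖∑ i, boolSign 𝕜 (ε i) • B (x i)‖) :=
        sum_le_sum fun ε _ => (norm_sub_le _ _).trans (by gcongr; exact hBx ε)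
    _ = 2 ^ n * (C * √n) + ∑ ε : Fin n → Bool, ‖∑ i, boolSign 𝕜 (ε i) • B (x i)‖ := by
        simp [sum_add_distrib]
    _ ≤ 2 ^ n * (C * √n) + 2 ^ n * (C * √n) := by
        grw [sum_norm_sum_boolSign_smul_le, Fintype.card_fin, hBy]
    _ = 2 ^ n * (2 * C * √n) := by ring

/-- if `B : H → H'` is any map between Hilbert spaces with
`‖Bx‖ ≤ C‖x‖`, then for every orthonormal family `x₁,…,xₙ` the average over all
`2ⁿ` sign choices of `‖B(∑ εᵢxᵢ) − ∑ εᵢ B(xᵢ)‖` is at most `2C√n`. -/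
theorem stmt_15 {𝕜 H H' : Type*} [RCLike 𝕜]
    [NormedAddCommGroup H] [InnerProductSpace 𝕜 H] [CompleteSpace H]
    [NormedAddCommGroup H'] [InnerProductSpace 𝕜 H'] [CompleteSpace H']
    (C : ℝ) (hC : 0 ≤ C) (B : H → H') (hB : ∀ x : H, ‖B x‖ ≤ C * ‖x‖)
    (n : ℕ) (x : Fin n → H) (hx : Orthonormal 𝕜 x) :
    (2 ^ n : ℝ)⁻¹ * ∑ ε : Fin n → Bool,
        ‖B (∑ i, (if ε i then (1 : 𝕜) else -1) • x i)
          - ∑ i, (if ε i then (1 : 𝕜) else -1) • B (x i)‖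
      ≤ 2 * C * Real.sqrt n :=
  stmt_15_general C hC B hB n x hx
end

section
/- Let Z be a Banach space, X a closed subspace, and T a bounded linear operator on Z such that: T(X) ⊆ X; T(T x) = −x for every x ∈ X; and T(T z) + z ∈ X for every z ∈ Z (so T extends a complex structure u on X and induces a complex structure v on Z/X). Then the bounded operator R := (T³ + 3T)/2 satisfies: R ∘ R = −id_Z (R is a complex structure on Z), R(X) ⊆ X, R x = T x for every x ∈ X, and R z − T z ∈ X for every z ∈ Z (so R extends u and induces v on Z/X). Thus if compatible complex structures u and v admit a bounded extension on a twisted sum, they admit a bounded extension which is itself a complex structure. -/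
/-!
Write `N := T² + 1`. It maps `Z` into `X` and vanishes on `X`, so `N² = 0`. The operator
`R = p(T)` with `p(λ) = (λ³ + 3λ)/2` satisfies `p² + 1 = ¼ (λ² + 4)(λ² + 1)²`, hence
`R² + 1 = ¼ (T² + 4) N² = 0`. Moreover `R - T = ½ T N`, which maps `Z` into `X` and vanishes on `X`.
-/

open Polynomial

theorem mul_self_half_cube_add_three_eq_neg_one {𝕜 A : Type*} [Field 𝕜] [Ring A] [Algebra 𝕜 A]
    (h2 : (2 : 𝕜) ≠ 0) {t : A} (ht : (t * t + 1) * (t * t + 1) = 0) :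
    ((2⁻¹ : 𝕜) • (t * t * t + (3 : 𝕜) • t)) * ((2⁻¹ : 𝕜) • (t * t * t + (3 : 𝕜) • t)) = -1 := by
  set p : 𝕜[X] := C 2⁻¹ * (X ^ 3 + 3 * X)
  have hp : p * p + 1 = C 2⁻¹ * C 2⁻¹ * (X ^ 2 + 4) * ((X ^ 2 + 1) * (X ^ 2 + 1)) := by
    have hc : C (2⁻¹ : 𝕜) * 2 = 1 := by rw [← C_ofNat, ← C_mul, inv_mul_cancel₀ h2, C_1]
    linear_combination (-(2 * C (2⁻¹ : 𝕜) + 1)) * hc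
  have hpt : aeval t p = (2⁻¹ : 𝕜) • (t * t * t + (3 : 𝕜) • t) := by
    simp [p, Algebra.smul_def, pow_succ, map_ofNat]
  rw [← hpt, ← map_mul, eq_neg_iff_add_eq_zero, ← map_one (aeval (R := 𝕜) t), ← map_add, hp]
  simp [pow_two, ht]

theorem ContinuousLinearMap.mul_self_add_one_mul_self_eq_zero {R M : Type*} [Ring R]
    [AddCommGroup M] [Module R M] [TopologicalSpace M] [IsTopologicalAddGroup M]
    {T : M →L[R] M} {X : Submodule R M} (hTsq : ∀ x ∈ X, T (T x) = -x)
    (hquot : ∀ z : M, T (T z) + z ∈ X) :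
    (T * T + 1) * (T * T + 1) = 0 := by
  ext z
  have h := hTsq _ (hquot z)
  rw [map_add] at h
  simp [h]

theorem stmt_16_general {Z : Type*} [NormedAddCommGroup Z] [NormedSpace ℝ Z]
    (X : Submodule ℝ Z)
    (T : Z →L[ℝ] Z)
    (hTX : ∀ x ∈ X, T x ∈ X)
    (hTsq : ∀ x ∈ X, T (T x) = -x)
    (hquot : ∀ z : Z, T (T z) + z ∈ X) :
    ∃ R : Z →L[ℝ] Z,
      (∀ z : Z, R z = (2⁻¹ : ℝ) • (T (T (T z)) + (3 : ℝ) • T z)) ∧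
      (∀ z : Z, R (R z) = -z) ∧
      (∀ x ∈ X, R x ∈ X) ∧
      (∀ x ∈ X, R x = T x) ∧
      (∀ z : Z, R z - T z ∈ X) := by
  set R : Z →L[ℝ] Z := (2⁻¹ : ℝ) • (T * T * T + (3 : ℝ) • T)
  have hRT : ∀ z, R z - T z = (2⁻¹ : ℝ) • T (T (T z) + z) := fun z => by
    simp only [smul_add, add_apply, smul_apply, mul_apply_eq_comp, map_add, R]
    module
  have hRX : ∀ x ∈ X, R x = T x := fun x hx => sub_eq_zero.mp <| by
    rw [hRT, hTsq x hx, neg_add_cancel, map_zero, smul_zero]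
  have hRR : R * R = -1 := mul_self_half_cube_add_three_eq_neg_one two_ne_zero
    (T.mul_self_add_one_mul_self_eq_zero hTsq hquot)
  refine ⟨R, fun z => rfl, fun z => congr($hRR z), fun x hx => hRX x hx ▸ hTX x hx, hRX,
    fun z => hRT z ▸ X.smul_mem _ (hTX _ (hquot z))⟩

/-- if `T` is a bounded operator on `Z` preserving a closed subspace
`X`, with `T² = −id` on `X` and `T² + id` mapping into `X` (so `T` extends a complex
structure on `X` and induces one on `Z/X`), then `R := (T³ + 3T)/2` is a complex
structure on `Z` which agrees with `T` on `X` and induces the same map on `Z/X`. -/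
theorem stmt_16 {Z : Type*} [NormedAddCommGroup Z] [NormedSpace ℝ Z] [CompleteSpace Z]
    (X : Submodule ℝ Z) (hXc : IsClosed (X : Set Z))
    (T : Z →L[ℝ] Z)
    (hTX : ∀ x ∈ X, T x ∈ X)
    (hTsq : ∀ x ∈ X, T (T x) = -x)
    (hquot : ∀ z : Z, T (T z) + z ∈ X) :
    ∃ R : Z →L[ℝ] Z,
      (∀ z : Z, R z = (2⁻¹ : ℝ) • (T (T (T z)) + (3 : ℝ) • T z)) ∧
      (∀ z : Z, R (R z) = -z) ∧
      (∀ x ∈ X, R x ∈ X) ∧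
      (∀ x ∈ X, R x = T x) ∧
      (∀ z : Z, R z - T z ∈ X) :=
  stmt_16_general X T hTX hTsq hquot
end

section
/- Let G be an amenable group. Let E and Y be real Banach spaces with bounded representations u and v of G by invertible operators (u(g⁻¹) = u(g)⁻¹, v(g⁻¹) = v(g)⁻¹), let X be a closed subspace of E with u(g)X ⊆ X for all g ∈ G, and assume X (with the restricted representation g ↦ u(g)|_X) is G-complemented in its bidual. Let Ω : Y → E be any map and let d₁, d₂ be two derivations (dᵢ(gh) = u(g)∘dᵢ(h) + dᵢ(g)∘v(h), each dᵢ(g) : Y → E linear) both compatible with Ω: there is C ≥ 0 such that for i = 1,2, all g ∈ G and y ∈ Y, u(g)(Ωy) − Ω(v(g)y) + dᵢ(g)y ∈ X and ‖u(g)(Ωy) − Ω(v(g)y) + dᵢ(g)y‖ ≤ C‖y‖. Then the two compatible actions are conjugate by a bounded perturbation: there exists a bounded linear operator A : Y → X such that d₁(g)y − d₂(g)y = u(g)(A y) − A(v(g) y) for all g ∈ G and y ∈ Y; equivalently, the triangular representations λᵢ(g)(x,y) = (u(g)x + dᵢ(g)y, v(g)y) satisfy λ₂(g) = S ∘ λ₁(g)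 ∘ S⁻¹ with S(x,y) = (x + A y, y). -/
/-!
Both `d₁ g` and `d₂ g` are, up to bounded `X`-valued errors, equal to `Ω ∘ v g - u g ∘ Ω`, so
`D = d₁ - d₂` is a derivation into `X` with `‖D g‖` uniformly bounded. Averaging the bounded family
`g ↦ u g ∘ D g⁻¹` against the invariant mean in the weak* sense gives `Ψ : Y → X**`; the
derivation law together with left invariance of the mean shows
`u(g)** ∘ Ψ = Ψ ∘ v g + j ∘ D g`, where `j : X → X**` is the canonical embedding. Applying the
equivariant projection `P : X** → X` yields `A = P ∘ Ψ` with `D g = u g ∘ A - A ∘ v g`.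
-/

open NormedSpace

noncomputable section

section Mean

variable {G : Type*}

structure IsLeftInvariantMean [Group G] (m : bddFuns G →ₗ[ℝ] ℝ) : Prop where
  map_of_forall_eq_one : ∀ f : bddFuns G, (∀ g, (f : G → ℝ) g = 1) → m f = 1
  nonneg : ∀ f : bddFuns G, (∀ g, 0 ≤ (f : G → ℝ) g) → 0 ≤ m f
  map_of_translate : ∀ (g₀ : G) (f f' : bddFuns G),
    (∀ g, (f' : G → ℝ) g = (f : G → ℝ) (g₀ * g)) → m f' = m f

def bddFuns.one (G : Type*) : bddFuns G := ⟨fun _ => 1, 1, fun _ => by simp⟩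

variable [Group G] {m : bddFuns G →ₗ[ℝ] ℝ}

theorem IsLeftInvariantMean.map_le {B : ℝ} (hm : IsLeftInvariantMean m) (f : bddFuns G)
    (hf : ∀ g, (f : G → ℝ) g ≤ B) : m f ≤ B := by
  have h := hm.nonneg (B • bddFuns.one G - f) fun g => by simpa [bddFuns.one] using hf g
  rw [map_sub, map_smul, hm.map_of_forall_eq_one _ fun _ => rfl, smul_eq_mul, mul_one] at h
  linarith

theorem IsLeftInvariantMean.le_map {B : ℝ} (hm : IsLeftInvariantMean m) (f : bddFuns G)
    (hf : ∀ g, B ≤ (f : G → ℝ) g) : B ≤ m f := by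
  have h := hm.map_le (-f) fun g => neg_le_neg (hf g)
  rw [map_neg] at h
  linarith

theorem IsLeftInvariantMean.abs_map_le {B : ℝ} (hm : IsLeftInvariantMean m) (f : bddFuns G)
    (hf : ∀ g, |(f : G → ℝ) g| ≤ B) : |m f| ≤ B :=
  abs_le.mpr ⟨hm.le_map f fun g => (abs_le.mp (hf g)).1, hm.map_le f fun g => (abs_le.mp (hf g)).2⟩

end Mean

section WeakStarAverage

variable {G X Y Z : Type*} [NormedAddCommGroup X] [NormedSpace ℝ X]
  [NormedAddCommGroup Y] [NormedSpace ℝ Y] [NormedAddCommGroup Z] [NormedSpace ℝ Z]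

def doubleDualMap (T : X →L[ℝ] Z) :
    StrongDual ℝ (StrongDual ℝ X) →L[ℝ] StrongDual ℝ (StrongDual ℝ Z) :=
  ContinuousLinearMap.precomp ℝ (ContinuousLinearMap.precomp ℝ T)

theorem doubleDualMap_apply_apply (T : X →L[ℝ] Z) (Φ : StrongDual ℝ (StrongDual ℝ X))
    (φ : StrongDual ℝ Z) : doubleDualMap T Φ φ = Φ (φ.comp T) :=
  rfl

theorem abs_apply_le_of_forall_opNorm_le (c : G → Y →L[ℝ] X) {K : ℝ} (hc : ∀ g, ‖c g‖ ≤ K)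
    (y : Y) (φ : StrongDual ℝ X) (g : G) : |φ (c g y)| ≤ K * ‖y‖ * ‖φ‖ := by
  rw [← Real.norm_eq_abs, mul_comm]
  exact (φ.le_opNorm _).trans <|
    mul_le_mul_of_nonneg_left ((c g).le_of_opNorm_le (hc g) y) (norm_nonneg φ)

def coeffFun (c : G → Y →L[ℝ] X) {K : ℝ} (hc : ∀ g, ‖c g‖ ≤ K) (y : Y)
    (φ : StrongDual ℝ X) : bddFuns G :=
  ⟨fun g => φ (c g y), K * ‖y‖ * ‖φ‖, fun g => abs_apply_le_of_forall_opNorm_le c hc y φ g⟩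

@[simp]
theorem coeffFun_apply (c : G → Y →L[ℝ] X) {K : ℝ} (hc : ∀ g, ‖c g‖ ≤ K) (y : Y)
    (φ : StrongDual ℝ X) (g : G) : (coeffFun c hc y φ : G → ℝ) g = φ (c g y) :=
  rfl

variable [Group G] {m : bddFuns G →ₗ[ℝ] ℝ}

def weakStarAverage (hm : IsLeftInvariantMean m) (c : G → Y →L[ℝ] X) {K : ℝ}
    (hc : ∀ g, ‖c g‖ ≤ K) : Y →L[ℝ] StrongDual ℝ (StrongDual ℝ X) :=
  LinearMap.mkContinuous₂
    (LinearMap.mk₂ ℝ (fun y φ => m (coeffFun c hc y φ))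
      (fun y y' φ => by rw [← map_add]; congr 1; ext g; simp)
      (fun a y φ => by rw [← map_smul]; congr 1; ext g; simp)
      (fun y φ φ' => by rw [← map_add]; congr 1)
      (fun a y φ => by rw [← map_smul]; congr 1))
    K fun y φ => by
      rw [LinearMap.mk₂_apply, Real.norm_eq_abs]
      exact hm.abs_map_le _ (abs_apply_le_of_forall_opNorm_le c hc y φ)

theorem weakStarAverage_apply_apply (hm : IsLeftInvariantMean m) (c : G → Y →L[ℝ] X) {K : ℝ}
    (hc : ∀ g, ‖c g‖ ≤ K) (y : Y) (φ : StrongDual ℝ X) :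
    weakStarAverage hm c hc y φ = m (coeffFun c hc y φ) :=
  rfl

end WeakStarAverage

section Derivation

variable {G X Y : Type*} [Group G] [NormedAddCommGroup X] [NormedSpace ℝ X]
  [NormedAddCommGroup Y] [NormedSpace ℝ Y]
  {w : G →* (X →L[ℝ] X)} {v : G → Y →L[ℝ] Y} {D : G → Y →L[ℝ] X}

theorem comp_derivation_inv_comp (hD : ∀ g h, D (g * h) = w g ∘L D h + D g ∘L v h)
    (g₀ g : G) :
    w g ∘L D g⁻¹ ∘L v g₀ = w g₀ ∘L (w (g₀⁻¹ * g) ∘L D (g₀⁻¹ * g)⁻¹) - D g₀ := by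
  have h : D g⁻¹ ∘L v g₀ = D (g⁻¹ * g₀) - w g⁻¹ ∘L D g₀ := by
    rw [hD]; abel
  rw [h, mul_inv_rev, inv_inv, ContinuousLinearMap.comp_sub, ← ContinuousLinearMap.comp_assoc,
    ← ContinuousLinearMap.comp_assoc, ← ContinuousLinearMap.mul_def, ← ContinuousLinearMap.mul_def,
    ← map_mul, ← map_mul, mul_inv_cancel_left, mul_inv_cancel, map_one]
  rfl

theorem norm_comp_derivation_inv_le {M K : ℝ} (hw : ∀ g, ‖w g‖ ≤ M) (hDK : ∀ g, ‖D g‖ ≤ K)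
    (g : G) : ‖w g ∘L D g⁻¹‖ ≤ M * K :=
  (ContinuousLinearMap.opNorm_comp_le _ _).trans <|
    mul_le_mul (hw g) (hDK _) (norm_nonneg _) ((norm_nonneg _).trans (hw 1))

variable {m : bddFuns G →ₗ[ℝ] ℝ}

theorem doubleDualMap_weakStarAverage_comp_derivation_inv (hm : IsLeftInvariantMean m) {M K : ℝ}
    (hw : ∀ g, ‖w g‖ ≤ M) (hDK : ∀ g, ‖D g‖ ≤ K)
    (hD : ∀ g h, D (g * h) = w g ∘L D h + D g ∘L v h) (g₀ : G) (y : Y) :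
    doubleDualMap (w g₀) (weakStarAverage hm _ (norm_comp_derivation_inv_le hw hDK) y) =
      weakStarAverage hm _ (norm_comp_derivation_inv_le hw hDK) (v g₀ y) +
        inclusionInDoubleDual ℝ X (D g₀ y) := by
  ext φ
  set c : G → Y →L[ℝ] X := fun g => w g ∘L D g⁻¹
  have hc := norm_comp_derivation_inv_le hw hDK
  have htranslate : m (coeffFun c hc (v g₀ y) φ + φ (D g₀ y) • bddFuns.one G) =
      m (coeffFun c hc y (φ.comp (w g₀))) := by
    refine hm.map_of_translate g₀⁻¹ _ _ fun g => ?_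
    have h := congr_arg φ (congr_arg (fun T => T y) (comp_derivation_inv_comp hD g₀ g))
    simp only [ContinuousLinearMap.comp_apply, sub_apply, map_sub] at h
    simp [c, bddFuns.one, h]
  rw [map_add, map_smul, hm.map_of_forall_eq_one (bddFuns.one G) fun _ => rfl, smul_eq_mul,
    mul_one] at htranslate
  rw [add_apply, doubleDualMap_apply_apply, weakStarAverage_apply_apply,
    weakStarAverage_apply_apply, dual_def, htranslate]

theorem exists_eq_comp_sub_comp_of_bounded_derivation (hm : IsLeftInvariantMean m) {M K : ℝ}
    (hw : ∀ g, ‖w g‖ ≤ M) (P : StrongDual ℝ (StrongDual ℝ X) →L[ℝ] X)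
    (hPj : ∀ x, P (inclusionInDoubleDual ℝ X x) = x)
    (hPw : ∀ g Φ, P (doubleDualMap (w g) Φ) = w g (P Φ)) (hDK : ∀ g, ‖D g‖ ≤ K)
    (hD : ∀ g h, D (g * h) = w g ∘L D h + D g ∘L v h) :
    ∃ A : Y →L[ℝ] X, ∀ g, D g = w g ∘L A - A ∘L v g := by
  refine ⟨P ∘L weakStarAverage hm _ (norm_comp_derivation_inv_le hw hDK), fun g => ?_⟩
  ext1 y
  simp only [sub_apply, ContinuousLinearMap.comp_apply]
  rw [← hPw, doubleDualMap_weakStarAverage_comp_derivation_inv hm hw hDK hD, map_add, hPj,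
    add_sub_cancel_left]

end Derivation

section Restriction

variable {G E : Type*} [Monoid G] [NormedAddCommGroup E] [NormedSpace ℝ E]

def MonoidHom.restrictCLM (u : G →* (E →L[ℝ] E)) (X : Submodule ℝ E)
    (hX : ∀ g, ∀ x ∈ X, u g x ∈ X) : G →* (X →L[ℝ] X) where
  toFun g := (u g).restrict (hX g)
  map_one' := by ext; simp
  map_mul' g h := by ext; simp

theorem MonoidHom.norm_restrictCLM_le (u : G →* (E →L[ℝ] E)) (X : Submodule ℝ E)
    (hX : ∀ g, ∀ x ∈ X, u g x ∈ X) (g : G) : ‖u.restrictCLM X hX g‖ ≤ ‖u g‖ :=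
  ContinuousLinearMap.opNorm_le_bound _ (norm_nonneg _) fun x => (u g).le_opNorm x

end Restriction

theorem exists_clm_coe_eq_sub_of_compatible {G E Y : Type*} [NormedAddCommGroup E]
    [NormedSpace ℝ E] [NormedAddCommGroup Y] [NormedSpace ℝ Y]
    (u : G → E →L[ℝ] E) (v : G → Y →L[ℝ] Y) (X : Submodule ℝ E) (Ω : Y → E)
    (d₁ d₂ : G → Y →ₗ[ℝ] E) (C : ℝ)
    (hcomp₁ : ∀ g y, u g (Ω y) - Ω (v g y) + d₁ g y ∈ X ∧
      ‖u g (Ω y) - Ω (v g y) + d₁ g y‖ ≤ C * ‖y‖)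
    (hcomp₂ : ∀ g y, u g (Ω y) - Ω (v g y) + d₂ g y ∈ X ∧
      ‖u g (Ω y) - Ω (v g y) + d₂ g y‖ ≤ C * ‖y‖) :
    ∃ D : G → Y →L[ℝ] X, (∀ g, ‖D g‖ ≤ max (2 * C) 0) ∧ ∀ g y, (D g y : E) = d₁ g y - d₂ g y := by
  have hdiff : ∀ g y, d₁ g y - d₂ g y ∈ X ∧ ‖d₁ g y - d₂ g y‖ ≤ 2 * C * ‖y‖ := by
    intro g y
    rw [show d₁ g y - d₂ g y =
      (u g (Ω y) - Ω (v g y) + d₁ g y) - (u g (Ω y) - Ω (v g y) + d₂ g y) by abel]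
    exact ⟨X.sub_mem (hcomp₁ g y).1 (hcomp₂ g y).1,
      (norm_sub_le _ _).trans (by linarith [(hcomp₁ g y).2, (hcomp₂ g y).2])⟩
  exact ⟨fun g => ((d₁ g - d₂ g).codRestrict X fun y => (hdiff g y).1).mkContinuous (2 * C)
    fun y => (hdiff g y).2, fun g => LinearMap.mkContinuous_norm_le' _ _, fun _ _ => rfl⟩

end

theorem stmt_18_general {G : Type*} [Group G]
    {E Y : Type*} [NormedAddCommGroup E] [NormedSpace ℝ E]
    [NormedAddCommGroup Y] [NormedSpace ℝ Y]
    -- amenability of G: existence of a left-invariant mean on ℓ∞(G,ℝ)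
    (hamen : ∃ m : bddFuns G →ₗ[ℝ] ℝ,
      (∀ f : bddFuns G, (∀ g : G, (f : G → ℝ) g = 1) → m f = 1) ∧
      (∀ f : bddFuns G, (∀ g : G, 0 ≤ (f : G → ℝ) g) → 0 ≤ m f) ∧
      (∀ (g₀ : G) (f f' : bddFuns G),
        (∀ g : G, (f' : G → ℝ) g = (f : G → ℝ) (g₀ * g)) → m f' = m f))
    -- bounded representations by invertible operators
    (u : G → E →L[ℝ] E) (v : G → Y →L[ℝ] Y)
    (hu : ∀ g h : G, u (g * h) = (u g).comp (u h))
    (huinv' : ∀ g : G, (u g).comp (u g⁻¹) = ContinuousLinearMap.id ℝ E)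
    (Mu : ℝ) (huM : ∀ g : G, ‖u g‖ ≤ Mu)
    -- the closed invariant subspace X of E
    (X : Submodule ℝ E)
    (hXinv : ∀ g : G, ∀ x ∈ X, u g x ∈ X)
    -- X (with the restricted representation) is G-complemented in its bidual
    (hcompl : ∃ P : StrongDual ℝ (StrongDual ℝ ↥X) →L[ℝ] ↥X,
      (∀ x : ↥X, P (inclusionInDoubleDual ℝ ↥X x) = x) ∧
      ∀ (g : G) (wg : ↥X →L[ℝ] ↥X), (∀ x : ↥X, (wg x : E) = u g (x : E)) →
        ∀ wgss : StrongDual ℝ (StrongDual ℝ ↥X) →L[ℝ] StrongDual ℝ (StrongDual ℝ ↥X),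
          (∀ (Φ : StrongDual ℝ (StrongDual ℝ ↥X)) (φ : StrongDual ℝ ↥X), wgss Φ φ = Φ (φ.comp wg)) →
          ∀ Φ : StrongDual ℝ (StrongDual ℝ ↥X), P (wgss Φ) = wg (P Φ))
    -- a quasi-linear map Ω and two compatible derivations d₁, d₂
    (Ω : Y → E) (d₁ d₂ : G → Y →ₗ[ℝ] E)
    (hd₁ : ∀ (g h : G) (y : Y), d₁ (g * h) y = u g (d₁ h y) + d₁ g (v h y))
    (hd₂ : ∀ (g h : G) (y : Y), d₂ (g * h) y = u g (d₂ h y) + d₂ g (v h y))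
    (C : ℝ)
    (hcomp₁ : ∀ (g : G) (y : Y),
      u g (Ω y) - Ω (v g y) + d₁ g y ∈ X ∧
      ‖u g (Ω y) - Ω (v g y) + d₁ g y‖ ≤ C * ‖y‖)
    (hcomp₂ : ∀ (g : G) (y : Y),
      u g (Ω y) - Ω (v g y) + d₂ g y ∈ X ∧
      ‖u g (Ω y) - Ω (v g y) + d₂ g y‖ ≤ C * ‖y‖) :
    ∃ A : Y →L[ℝ] E,
      (∀ y : Y, A y ∈ X) ∧
      (∀ (g : G) (y : Y), d₁ g y - d₂ g y = u g (A y) - A (v g y)) ∧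
      (∀ (g : G) (x : E) (y : Y),
        u g x + d₁ g y + A (v g y) = u g (x + A y) + d₂ g y) := by
  obtain ⟨m, hm_one, hm_nonneg, hm_translate⟩ := hamen
  obtain ⟨P, hPj, hPcomm⟩ := hcompl
  have hu1 : u 1 = ContinuousLinearMap.id ℝ E := by simpa [← hu] using huinv' 1
  let U : G →* (E →L[ℝ] E) := ⟨⟨u, hu1⟩, hu⟩
  obtain ⟨D, hDK, hD_coe⟩ := exists_clm_coe_eq_sub_of_compatible u v X Ω d₁ d₂ C hcomp₁ hcomp₂
  have hD : ∀ g h, D (g * h) = U.restrictCLM X hXinv g ∘L D h + D g ∘L v h := by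
    intro g h
    ext y
    change (D (g * h) y : E) = u g (D h y) + D g (v h y)
    rw [hD_coe, hD_coe, hD_coe, hd₁, hd₂, map_sub]
    abel
  obtain ⟨A, hA⟩ := exists_eq_comp_sub_comp_of_bounded_derivation
    ⟨hm_one, hm_nonneg, hm_translate⟩ (fun g => (U.norm_restrictCLM_le X hXinv g).trans (huM g))
    P hPj (fun g => hPcomm g _ (fun _ => rfl) _ fun _ _ => rfl) hDK hD
  have hA' : ∀ g y, d₁ g y - d₂ g y = u g (A y) - A (v g y) := fun g y => by
    rw [← hD_coe, hA]
    rfl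
  refine ⟨X.subtypeL ∘L A, fun y => (A y).2, hA', fun g x y => ?_⟩
  have h := hA' g y
  rw [sub_eq_iff_eq_add] at h
  simp only [ContinuousLinearMap.comp_apply, Submodule.subtypeL_apply, map_add, h]
  abel

/-- uniqueness of compatible actions: if `G` is amenable and `X` is
`G`-complemented in its bidual, then any two derivations `d₁, d₂` compatible with the
same quasi-linear map `Ω` differ by an inner derivation: `d₁(g) − d₂(g) = [u(g),A,v(g)]`
for a bounded linear `A : Y → X`; equivalently the triangular representations are
conjugated by `S(x,y) = (x + Ay, y)`. -/
theorem stmt_18 {G : Type*} [Group G]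
    {E Y : Type*} [NormedAddCommGroup E] [NormedSpace ℝ E] [CompleteSpace E]
    [NormedAddCommGroup Y] [NormedSpace ℝ Y] [CompleteSpace Y]
    -- amenability of G: existence of a left-invariant mean on ℓ∞(G,ℝ)
    (hamen : ∃ m : bddFuns G →ₗ[ℝ] ℝ,
      (∀ f : bddFuns G, (∀ g : G, (f : G → ℝ) g = 1) → m f = 1) ∧
      (∀ f : bddFuns G, (∀ g : G, 0 ≤ (f : G → ℝ) g) → 0 ≤ m f) ∧
      (∀ (g₀ : G) (f f' : bddFuns G),
        (∀ g : G, (f' : G → ℝ) g = (f : G → ℝ) (g₀ * g)) → m f' = m f))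
    -- bounded representations by invertible operators
    (u : G → E →L[ℝ] E) (v : G → Y →L[ℝ] Y)
    (hu : ∀ g h : G, u (g * h) = (u g).comp (u h))
    (hv : ∀ g h : G, v (g * h) = (v g).comp (v h))
    (huinv : ∀ g : G, (u g⁻¹).comp (u g) = ContinuousLinearMap.id ℝ E)
    (huinv' : ∀ g : G, (u g).comp (u g⁻¹) = ContinuousLinearMap.id ℝ E)
    (hvinv : ∀ g : G, (v g⁻¹).comp (v g) = ContinuousLinearMap.id ℝ Y)
    (hvinv' : ∀ g : G, (v g).comp (v g⁻¹) = ContinuousLinearMap.id ℝ Y)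
    (Mu : ℝ) (huM : ∀ g : G, ‖u g‖ ≤ Mu) (Mv : ℝ) (hvM : ∀ g : G, ‖v g‖ ≤ Mv)
    -- the closed invariant subspace X of E
    (X : Submodule ℝ E) (hXc : IsClosed (X : Set E))
    (hXinv : ∀ g : G, ∀ x ∈ X, u g x ∈ X)
    -- X (with the restricted representation) is G-complemented in its bidual
    (hcompl : ∃ P : StrongDual ℝ (StrongDual ℝ ↥X) →L[ℝ] ↥X,
      (∀ x : ↥X, P (inclusionInDoubleDual ℝ ↥X x) = x) ∧
      ∀ (g : G) (wg : ↥X →L[ℝ] ↥X), (∀ x : ↥X, (wg x : E) = u g (x : E)) →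
        ∀ wgss : StrongDual ℝ (StrongDual ℝ ↥X) →L[ℝ] StrongDual ℝ (StrongDual ℝ ↥X),
          (∀ (Φ : StrongDual ℝ (StrongDual ℝ ↥X)) (φ : StrongDual ℝ ↥X), wgss Φ φ = Φ (φ.comp wg)) →
          ∀ Φ : StrongDual ℝ (StrongDual ℝ ↥X), P (wgss Φ) = wg (P Φ))
    -- a quasi-linear map Ω and two compatible derivations d₁, d₂
    (Ω : Y → E) (d₁ d₂ : G → Y →ₗ[ℝ] E)
    (hd₁ : ∀ (g h : G) (y : Y), d₁ (g * h) y = u g (d₁ h y) + d₁ g (v h y))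
    (hd₂ : ∀ (g h : G) (y : Y), d₂ (g * h) y = u g (d₂ h y) + d₂ g (v h y))
    (C : ℝ) (hC : 0 ≤ C)
    (hcomp₁ : ∀ (g : G) (y : Y),
      u g (Ω y) - Ω (v g y) + d₁ g y ∈ X ∧
      ‖u g (Ω y) - Ω (v g y) + d₁ g y‖ ≤ C * ‖y‖)
    (hcomp₂ : ∀ (g : G) (y : Y),
      u g (Ω y) - Ω (v g y) + d₂ g y ∈ X ∧
      ‖u g (Ω y) - Ω (v g y) + d₂ g y‖ ≤ C * ‖y‖) :
    ∃ A : Y →L[ℝ] E,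
      (∀ y : Y, A y ∈ X) ∧
      (∀ (g : G) (y : Y), d₁ g y - d₂ g y = u g (A y) - A (v g y)) ∧
      (∀ (g : G) (x : E) (y : Y),
        u g x + d₁ g y + A (v g y) = u g (x + A y) + d₂ g y) :=
  stmt_18_general hamen u v hu huinv' Mu huM X hXinv hcompl Ω d₁ d₂ hd₁ hd₂ C hcomp₁ hcomp₂
end

section
/- Let c₀ be the Banach space of real sequences converging to 0 with the sup norm, and let G be the group of sequences ε : ℕ → {−1,1} with εᵢ = 1 for all but finitely many i, under pointwise multiplication. For ε ∈ G let S(ε) = {i : εᵢ = −1} and define T_ε on the Banach space c₀ × ℝ (with norm ‖(x,t)‖ = ‖x‖_∞ + |t|) by T_ε(x, t) = (ε·x + t·𝟙_{S(ε)}, t), where ε·x is the pointwise product and 𝟙_{S(ε)} ∈ c₀ is the indicator sequence of the finite set S(ε). Then: (1) ε ↦ T_ε is a group homomorphism into the bounded invertible operators on c₀ × ℝ, with T_ε ∘ T_ε = id and ‖T_ε‖ ≤ 2 for every ε ∈ G, and each T_ε maps the subspace c₀ × {0} into itself; (2) the projection π(x,t) = t admits no G-equivariant linear section: there is no linear map s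 : ℝ → c₀ × ℝ with π ∘ s = id_ℝ and T_ε ∘ s = s for all ε ∈ G; equivalently, there is no x₀ ∈ c₀ with ε·x₀ + 𝟙_{S(ε)} = x₀ for all ε ∈ G. Hence the exact sequence 0 → c₀ → c₀ × ℝ → ℝ → 0 of G-spaces splits in the Banach space category but does not G-split (Ext_G(ℝ, c₀) ≠ 0). -/
/-!
Outside the finite set `S(ε)` the sign sequence `ε` is `1`, so `T_ε` changes an element of `c₀`
only in finitely many coordinates and stays in `c₀`; the group law, involutivity and the bound
`‖T_ε‖ ≤ 2` are coordinatewise identities for a sign `ε n = ±1`. The first coordinate of an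
equivariant section at `1` would be a common fixed point `x₀` of the maps `x ↦ ε·x + 𝟙_{S(ε)}`.
Flipping only the sign of coordinate `m` gives `-x₀ m + 1 = x₀ m`, so `x₀` is constantly `1/2`
and does not tend to `0`.
-/

open Filter ZeroAtInfty

namespace ZeroAtInftyContinuousMap

variable {X β : Type*} [TopologicalSpace X] [DiscreteTopology X] [TopologicalSpace β] [Zero β]

theorem exists_coe_eq_of_eventuallyEq (y : C₀(X, β)) {f : X → β}
    (h : ⇑y =ᶠ[cocompact X] f) : ∃ z : C₀(X, β), ⇑z = f :=
  ⟨⟨⟨f, continuous_of_discreteTopology⟩, y.zero_at_infty'.congr' h⟩, rfl⟩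

end ZeroAtInftyContinuousMap

section SignTwist

variable {ε ε' a t : ℝ}

theorem sign_twist_sign_twist (hε : ε = 1 ∨ ε = -1) :
    ε * (ε * a + t * (if ε = -1 then 1 else 0)) + t * (if ε = -1 then 1 else 0) = a := by
  rcases hε with rfl | rfl <;> norm_num

theorem sign_twist_mul (hε : ε = 1 ∨ ε = -1) (hε' : ε' = 1 ∨ ε' = -1) :
    ε * (ε' * a + t * (if ε' = -1 then 1 else 0)) + t * (if ε = -1 then 1 else 0) =
      (ε * ε') * a + t * (if ε * ε' = -1 then 1 else 0) := by
  rcases hε with rfl | rfl <;> rcases hε' with rfl | rfl <;> norm_num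

theorem abs_sign_twist_le (hε : ε = 1 ∨ ε = -1) :
    |ε * a + t * (if ε = -1 then 1 else 0)| ≤ |a| + |t| := by
  rcases hε with rfl | rfl <;> norm_num
  calc |-a + t| ≤ |-a| + |t| := abs_add_le _ _
    _ = |a| + |t| := by rw [abs_neg]

end SignTwist

theorem exists_sign_twist (ε : ℕ → ℝ) (hε : ∀ n, ε n = 1 ∨ ε n = -1)
    (hfin : {n | ε n = -1}.Finite) (y : C₀(ℕ, ℝ)) (t : ℝ) :
    ∃ z : C₀(ℕ, ℝ), ∀ n, z n = ε n * y n + t * (if ε n = -1 then 1 else 0) := by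
  have hagree : ⇑y =ᶠ[cocompact ℕ] fun n => ε n * y n + t * (if ε n = -1 then 1 else 0) := by
    filter_upwards [hfin.isCompact.compl_mem_cocompact] with n hn
    norm_num [(hε n).resolve_right hn]
  obtain ⟨z, hz⟩ := y.exists_coe_eq_of_eventuallyEq hagree
  exact ⟨z, congrFun hz⟩

theorem norm_sign_twist_add_abs_le (ε : ℕ → ℝ) (hε : ∀ n, ε n = 1 ∨ ε n = -1)
    (y z : C₀(ℕ, ℝ)) (t : ℝ)
    (hz : ∀ n, z n = ε n * y n + t * (if ε n = -1 then 1 else 0)) :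
    ‖z‖ + |t| ≤ 2 * (‖y‖ + |t|) := by
  have hz_le : ‖z‖ ≤ ‖y‖ + |t| := by
    rw [← ZeroAtInftyContinuousMap.norm_toBCF_eq_norm]
    refine (BoundedContinuousFunction.norm_le (by positivity)).2 fun n => ?_
    calc ‖z n‖ ≤ |y n| + |t| := by
          rw [Real.norm_eq_abs, hz n]; exact abs_sign_twist_le (hε n)
      _ ≤ ‖y‖ + |t| := by
          gcongr
          rw [← ZeroAtInftyContinuousMap.norm_toBCF_eq_norm]
          exact y.toBCF.norm_coe_le_norm n
  linarith [norm_nonneg y]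

theorem not_exists_sign_twist_fixed :
    ¬ ∃ x₀ : C₀(ℕ, ℝ), ∀ ε : ℕ → ℝ, (∀ n, ε n = 1 ∨ ε n = -1) → {n | ε n = -1}.Finite →
      ∀ n, ε n * x₀ n + (if ε n = -1 then 1 else 0) = x₀ n := by
  rintro ⟨x₀, hx₀⟩
  have hhalf : ∀ m, x₀ m = 1 / 2 := fun m => by
    have hflip := hx₀ (fun n => if n = m then -1 else 1)
      (fun n => by split_ifs <;> simp) ((Set.finite_singleton m).subset fun n hn => by
        norm_num at hn; exact hn) m
    norm_num at hflip
    linarith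
  have hlim : Tendsto (fun _ : ℕ => (1 / 2 : ℝ)) (cocompact ℕ) (nhds 0) := by
    simpa only [← funext hhalf] using zero_at_infty x₀
  norm_num at hlim

/-- the sign-change group `G = {ε : ℕ → {−1,1} : εᵢ = 1 eventually}`
acts on `c₀ × ℝ` (with norm `‖x‖∞ + |t|`) by `T_ε(x,t) = (ε·x + t·𝟙_{S(ε)}, t)`.
This is a uniformly bounded (by 2) involutive representation preserving `c₀ × {0}`,
giving an exact sequence `0 → c₀ → c₀ × ℝ → ℝ → 0` of `G`-spaces which splits in the
Banach space category but admits no `G`-equivariant linear section, hence does not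
`G`-split: `Ext_G(ℝ, c₀) ≠ 0`. Here `c₀ = C₀(ℕ,ℝ)` and `T_ε` is described through
the pointwise formula for its first coordinate. -/
theorem stmt_19 :
    -- (1) T_ε is well defined on c₀ × ℝ: ε·x + t·𝟙_{S(ε)} lies in c₀ ...
    (∀ ε : ℕ → ℝ, (∀ n, ε n = 1 ∨ ε n = -1) → {n | ε n = -1}.Finite →
      ∀ (y : ZeroAtInftyContinuousMap ℕ ℝ) (t : ℝ),
        ∃ z : ZeroAtInftyContinuousMap ℕ ℝ,
          ∀ n, z n = ε n * y n + t * (if ε n = -1 then 1 else 0)) ∧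
    -- ... it preserves the subspace c₀ × {0}, on which it acts by ε·x ...
    (∀ ε : ℕ → ℝ, (∀ n, ε n = 1 ∨ ε n = -1) → {n | ε n = -1}.Finite →
      ∀ y : ZeroAtInftyContinuousMap ℕ ℝ,
        ∃ z : ZeroAtInftyContinuousMap ℕ ℝ, ∀ n, z n = ε n * y n) ∧
    -- ... ε ↦ T_ε is multiplicative: T_{ε·ε'} = T_ε ∘ T_{ε'} ...
    (∀ ε ε' : ℕ → ℝ, (∀ n, ε n = 1 ∨ ε n = -1) → {n | ε n = -1}.Finite →
      (∀ n, ε' n = 1 ∨ ε' n = -1) → {n | ε' n = -1}.Finite →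
      ∀ (y z z' z'' : ZeroAtInftyContinuousMap ℕ ℝ) (t : ℝ),
        (∀ n, z n = ε' n * y n + t * (if ε' n = -1 then 1 else 0)) →
        (∀ n, z' n = ε n * z n + t * (if ε n = -1 then 1 else 0)) →
        (∀ n, z'' n = (ε n * ε' n) * y n + t * (if ε n * ε' n = -1 then 1 else 0)) →
        z'' = z') ∧
    -- ... each T_ε is an involution (in particular invertible) ...
    (∀ ε : ℕ → ℝ, (∀ n, ε n = 1 ∨ ε n = -1) → {n | ε n = -1}.Finite →
      ∀ (y z z' : ZeroAtInftyContinuousMap ℕ ℝ) (t : ℝ),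
        (∀ n, z n = ε n * y n + t * (if ε n = -1 then 1 else 0)) →
        (∀ n, z' n = ε n * z n + t * (if ε n = -1 then 1 else 0)) →
        z' = y) ∧
    -- ... and ‖T_ε‖ ≤ 2 for the norm ‖(x,t)‖ = ‖x‖∞ + |t| ...
    (∀ ε : ℕ → ℝ, (∀ n, ε n = 1 ∨ ε n = -1) → {n | ε n = -1}.Finite →
      ∀ (y z : ZeroAtInftyContinuousMap ℕ ℝ) (t : ℝ),
        (∀ n, z n = ε n * y n + t * (if ε n = -1 then 1 else 0)) →
        ‖z‖ + |t| ≤ 2 * (‖y‖ + |t|)) ∧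
    -- (2) the projection (x,t) ↦ t admits no G-equivariant linear section ...
    (¬ ∃ s : ℝ →ₗ[ℝ] (ZeroAtInftyContinuousMap ℕ ℝ) × ℝ,
      (∀ r : ℝ, (s r).2 = r) ∧
      ∀ ε : ℕ → ℝ, (∀ n, ε n = 1 ∨ ε n = -1) → {n | ε n = -1}.Finite →
        ∀ (r : ℝ) (z : ZeroAtInftyContinuousMap ℕ ℝ),
          (∀ n, z n = ε n * (s r).1 n + (s r).2 * (if ε n = -1 then 1 else 0)) →
          (z, (s r).2) = s r) ∧
    -- ... equivalently, there is no T_ε-fixed vector x₀ ∈ c₀: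
    (¬ ∃ x₀ : ZeroAtInftyContinuousMap ℕ ℝ,
      ∀ ε : ℕ → ℝ, (∀ n, ε n = 1 ∨ ε n = -1) → {n | ε n = -1}.Finite →
        ∀ n, ε n * x₀ n + (if ε n = -1 then 1 else 0) = x₀ n) := by
  refine ⟨exists_sign_twist, ?_, ?_, ?_, fun ε hε _ => norm_sign_twist_add_abs_le ε hε, ?_,
    not_exists_sign_twist_fixed⟩
  · intro ε hε hfin y
    obtain ⟨z, hz⟩ := exists_sign_twist ε hε hfin y 0
    exact ⟨z, fun n => by simp [hz n]⟩
  · intro ε ε' hε _ hε' _ y z z' z'' t hz hz' hz''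
    ext n
    rw [hz'' n, hz' n, hz n, sign_twist_mul (hε n) (hε' n)]
  · intro ε hε _ y z z' t hz hz'
    ext n
    rw [hz' n, hz n, sign_twist_sign_twist (hε n)]
  · rintro ⟨s, hs, hequivariant⟩
    refine not_exists_sign_twist_fixed ⟨(s 1).1, fun ε hε hfin n => ?_⟩
    obtain ⟨z, hz⟩ := exists_sign_twist ε hε hfin (s 1).1 (s 1).2
    have hz_eq : z = (s 1).1 := congrArg Prod.fst (hequivariant ε hε hfin 1 z hz)
    simpa [hz_eq, hs 1] using (hz n).symm
end
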